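/- arXiv:1009.5281 — 6 statements merged into one kernel-verified Lean document; each statement's English description precedes it below -/
import Mathlib

section
/- Let (f_r)_{r≥1} be a sequence of arithmetic functions such that (i) f_r is r-even for each r ≥ 1, and (ii) for each fixed n ≥ 1 the function r ↦ f_r(n) is multiplicative. Then: (1) the two-variable function f(n,r) = f_r(n) is multiplicative as a function of two variables, i.e., f_{rs}(mn) = f_r(m) f_s(n) whenever gcd(mr, ns) = 1; (2) f_r(m) f_r(n) = f_r(1) f_r(mn) for all m, n, r ≥ 1 with gcd(m,n) = 1; (3) for fixed r, the function n ↦ f_r(n) is multiplicative if and only if f_r(1) = 1. -/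
open Finset

/-- The discrete Fourier transform of an `r`-periodic arithmetic function:
`f̂(n) = Σ_{k=1}^{r} f(k) exp(−2πikn/r)`. -/
noncomputable def dft (r : ℕ) (f : ℕ → ℂ) (n : ℕ) : ℂ :=
  ∑ k ∈ Finset.Icc 1 r, f k * Complex.exp (-(2 * (Real.pi : ℂ) * Complex.I * (k : ℂ) * (n : ℂ) / (r : ℂ)))

/-- The Ramanujan sum `c_q(n) = Σ_{1≤k≤q, gcd(k,q)=1} exp(2πikn/q)`. -/
noncomputable def ram (q n : ℕ) : ℂ :=
  ∑ k ∈ (Finset.Icc 1 q).filter (fun k => Nat.gcd k q = 1),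
    Complex.exp (2 * (Real.pi : ℂ) * Complex.I * (k : ℂ) * (n : ℂ) / (q : ℂ))

/-- `f` is `r`-even: `f(gcd(n,r)) = f(n)` for all `n ≥ 1`. -/
def IsREven (r : ℕ) (f : ℕ → ℂ) : Prop :=
  ∀ n : ℕ, 1 ≤ n → f (Nat.gcd n r) = f n

/-- `f' = μ * f`, the Dirichlet convolution of the Möbius function with `f`. -/
noncomputable def moeConv (f : ℕ → ℂ) (n : ℕ) : ℂ :=
  ∑ d ∈ n.divisors, ((ArithmeticFunction.moebius d : ℤ) : ℂ) * f (n / d)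

/-- `g` is multiplicative: `g(1) = 1` and `g(mn) = g(m)g(n)` whenever `gcd(m,n) = 1`. -/
def IsMult (g : ℕ → ℂ) : Prop :=
  g 1 = 1 ∧ ∀ m n : ℕ, 1 ≤ m → 1 ≤ n → Nat.Coprime m n → g (m * n) = g m * g n

/-- For a sequence `(f_r)` of `r`-even functions with `r ↦ f_r(n)` multiplicative:
(1) `(n,r) ↦ f_r(n)` is multiplicative as a function of two variables;
(2) `f_r(m) f_r(n) = f_r(1) f_r(mn)` whenever `gcd(m,n) = 1`;
(3) `n ↦ f_r(n)` is multiplicative iff `f_r(1) = 1`. -/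
theorem dft_stmt_13 (f : ℕ → ℕ → ℂ)
    (h1 : ∀ r : ℕ, 1 ≤ r → IsREven r (f r))
    (h2 : ∀ n : ℕ, 1 ≤ n → IsMult (fun r => f r n)) :
    (∀ m n r s : ℕ, 1 ≤ m → 1 ≤ n → 1 ≤ r → 1 ≤ s → Nat.Coprime (m * r) (n * s) →
        f (r * s) (m * n) = f r m * f s n) ∧
    (∀ m n r : ℕ, 1 ≤ m → 1 ≤ n → 1 ≤ r → Nat.Coprime m n →
        f r m * f r n = f r 1 * f r (m * n)) ∧
    (∀ r : ℕ, 1 ≤ r → (IsMult (f r) ↔ f r 1 = 1)) := by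

  -- `f 1 n = 1` for all `n ≥ 1`
  have hf1 : ∀ n : ℕ, 1 ≤ n → f 1 n = 1 := fun n hn => (h2 n hn).1
  -- absorption: if `gcd(n, r) = 1` then `f r (n * k) = f r k`
  have habs : ∀ r : ℕ, 1 ≤ r → ∀ n k : ℕ, 1 ≤ n → 1 ≤ k → Nat.Coprime n r →
      f r (n * k) = f r k := by
    intro r hr n k hn hk hc
    calc f r (n * k) = f r (Nat.gcd (n * k) r) := (h1 r hr (n * k) (Nat.mul_pos hn hk)).symm
      _ = f r (Nat.gcd k r) := by rw [hc.gcd_mul_left_cancel k]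
      _ = f r k := h1 r hr k hk
  -- prime power case of part (2)
  have hpp : ∀ q a : ℕ, Nat.Prime q → ∀ m n : ℕ, 1 ≤ m → 1 ≤ n → Nat.Coprime m n →
      f (q ^ a) m * f (q ^ a) n = f (q ^ a) 1 * f (q ^ a) (m * n) := by
    intro q a hq m n hm hn hmn
    have hqa : 1 ≤ q ^ a := Nat.pow_pos hq.pos
    by_cases hdvd : q ∣ n
    · have hqm : ¬ q ∣ m := by
        intro h
        have hd : q ∣ Nat.gcd m n := Nat.dvd_gcd h hdvd
        rw [hmn] at hd
        exact hq.one_lt.ne' (Nat.dvd_one.mp hd)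
      have hc : Nat.Coprime m (q ^ a) :=
        Nat.Coprime.pow_right a ((hq.coprime_iff_not_dvd.mpr hqm).symm)
      have e1 : f (q ^ a) m = f (q ^ a) 1 := by
        simpa using habs (q ^ a) hqa m 1 hm le_rfl hc
      have e2 : f (q ^ a) (m * n) = f (q ^ a) n := habs (q ^ a) hqa m n hm hn hc
      rw [e1, e2]
    · have hc : Nat.Coprime n (q ^ a) :=
        Nat.Coprime.pow_right a ((hq.coprime_iff_not_dvd.mpr hdvd).symm)
      have e1 : f (q ^ a) n = f (q ^ a) 1 := by
        simpa using habs (q ^ a) hqa n 1 hn le_rfl hc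
      have e2 : f (q ^ a) (m * n) = f (q ^ a) m := by
        rw [mul_comm m n]; exact habs (q ^ a) hqa n m hn hm hc
      rw [e1, e2]; ring
  -- part (2), by strong induction on r
  have key : ∀ r : ℕ, 1 ≤ r → ∀ m n : ℕ, 1 ≤ m → 1 ≤ n → Nat.Coprime m n →
      f r m * f r n = f r 1 * f r (m * n) := by
    intro r
    induction r using Nat.strong_induction_on with
    | _ r ih =>
      intro hr m n hm hn hmn
      rcases eq_or_ne r 1 with rfl | hr1
      · rw [hf1 m hm, hf1 n hn, hf1 1 le_rfl, hf1 (m * n) (Nat.mul_pos hm hn)]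
      · set p := r.minFac with hp
        have hprime : p.Prime := Nat.minFac_prime hr1
        set a := r.factorization p with ha
        have hpr : p ∣ r := Nat.minFac_dvd r
        have hrne : r ≠ 0 := Nat.one_le_iff_ne_zero.mp hr
        have hapos : 0 < a := hprime.factorization_pos_of_dvd hrne hpr
        have huv : p ^ a * (r / p ^ a) = r := Nat.ordProj_mul_ordCompl_eq_self r p
        have hcop : Nat.Coprime (p ^ a) (r / p ^ a) :=
          Nat.Coprime.pow_left a (Nat.coprime_ordCompl hprime hrne)
        have hu1 : 1 ≤ p ^ a := Nat.pow_pos hprime.pos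
        have hv1 : 1 ≤ r / p ^ a := Nat.ordCompl_pos p hrne
        have hvlt : r / p ^ a < r :=
          Nat.div_lt_self hr (Nat.one_lt_pow hapos.ne' hprime.one_lt)
        have split : ∀ x : ℕ, 1 ≤ x → f r x = f (p ^ a) x * f (r / p ^ a) x := by
          intro x hx
          have h := (h2 x hx).2 (p ^ a) (r / p ^ a) hu1 hv1 hcop
          rw [huv] at h
          exact h
        have h1e := hpp p a hprime m n hm hn hmn
        have h2e := ih (r / p ^ a) hvlt hv1 m n hm hn hmn
        rw [split m hm, split n hn, split 1 le_rfl, split (m * n) (Nat.mul_pos hm hn)]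
        linear_combination (f (r / p ^ a) m * f (r / p ^ a) n) * h1e +
          (f (p ^ a) 1 * f (p ^ a) (m * n)) * h2e
  refine ⟨?_, ?_, ?_⟩
  · -- part (1)
    intro m n r s hm hn hr hs hc
    have hrs : Nat.Coprime r s :=
      (hc.coprime_dvd_left (dvd_mul_left r m)).coprime_dvd_right (dvd_mul_left s n)
    have hnr : Nat.Coprime n r :=
      ((hc.coprime_dvd_left (dvd_mul_left r m)).coprime_dvd_right (dvd_mul_right n s)).symm
    have hms : Nat.Coprime m s :=
      (hc.coprime_dvd_left (dvd_mul_right m r)).coprime_dvd_right (dvd_mul_left s n)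
    have hmn1 : 1 ≤ m * n := Nat.mul_pos hm hn
    have e0 : f (r * s) (m * n) = f r (m * n) * f s (m * n) :=
      (h2 (m * n) hmn1).2 r s hr hs hrs
    have e1 : f r (m * n) = f r m := by
      rw [mul_comm m n]; exact habs r hr n m hn hm hnr
    have e2 : f s (m * n) = f s n := habs s hs m n hm hn hms
    rw [e0, e1, e2]
  · -- part (2)
    intro m n r hm hn hr hmn
    exact key r hr m n hm hn hmn
  · -- part (3)
    intro r hr
    constructor
    · intro h; exact h.1
    · intro h
      refine ⟨h, fun m n hm hn hmn => ?_⟩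
      have hk := key r hr m n hm hn hmn
      rw [h, one_mul] at hk
      exact hk.symm
end

section
/- Let (f_r)_{r≥1} be a sequence of arithmetic functions such that (i) f_r is r-even for each r ≥ 1, and (ii) for each fixed n ≥ 1 the function r ↦ f_r(n) is multiplicative. Then: (1) for each fixed n ≥ 1 the function r ↦ f̂_r(n) is multiplicative; (2) the two-variable function (n,r) ↦ f̂_r(n) is multiplicative as a function of two variables, i.e., f̂_{rs}(mn) = f̂_r(m) f̂_s(n) whenever gcd(mr, ns) = 1; (3) f̂_r(m) f̂_r(n) = f'_r(r) · f̂_r(mn) for all m, n, r ≥ 1 with gcd(m,n) = 1, where f'_r = μ * f_r; (4) for fixed r, the function n ↦ f̂_r(n) is multiplicative if and only if f'_r(r) = 1. -/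
open Finset

/-! ### Auxiliary lemmas -/

lemma sum_exp_icc (q n : ℕ) (hq : q ≠ 0) :
    ∑ j ∈ Icc 1 q, Complex.exp (-(2 * (Real.pi:ℂ) * Complex.I * (j:ℂ) * (n:ℂ) / (q:ℂ))) =
      if q ∣ n then (q:ℂ) else 0 := by
  have hq0 : (q:ℂ) ≠ 0 := Nat.cast_ne_zero.mpr hq
  set z : ℂ := Complex.exp (-(2 * (Real.pi:ℂ) * Complex.I * (n:ℂ) / (q:ℂ))) with hz
  have hzj : ∀ j : ℕ, Complex.exp (-(2 * (Real.pi:ℂ) * Complex.I * (j:ℂ) * (n:ℂ) / (q:ℂ))) = z ^ j := by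
    intro j
    rw [hz, ← Complex.exp_nat_mul]
    ring_nf
  simp only [hzj]
  have hzq : z ^ q = 1 := by
    rw [hz, ← Complex.exp_nat_mul]
    have : (q:ℂ) * (-(2 * (Real.pi:ℂ) * Complex.I * (n:ℂ) / (q:ℂ))) = ((-(n:ℤ) : ℤ):ℂ) * (2 * (Real.pi:ℂ) * Complex.I) := by
      push_cast
      field_simp
    rw [this, Complex.exp_int_mul_two_pi_mul_I]
  by_cases hdvd : q ∣ n
  · obtain ⟨t, rfl⟩ := hdvd
    have hz1 : z = 1 := by
      rw [hz]
      have : -(2 * (Real.pi:ℂ) * Complex.I * ((q*t : ℕ):ℂ) / (q:ℂ)) = ((-(t:ℤ) : ℤ):ℂ) * (2 * (Real.pi:ℂ) * Complex.I) := by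
        push_cast
        field_simp
      rw [this, Complex.exp_int_mul_two_pi_mul_I]
    simp [hz1, if_pos]
  · rw [if_neg hdvd]
    have hne : (2 * (Real.pi:ℂ) * Complex.I) ≠ 0 := by
      simp [Real.pi_ne_zero, Complex.I_ne_zero, Complex.ofReal_ne_zero]
    have hz1 : z ≠ 1 := by
      intro h
      rw [hz, Complex.exp_eq_one_iff] at h
      obtain ⟨k, hk⟩ := h
      apply hdvd
      field_simp at hk
      have h3 : (2 * (Real.pi:ℂ) * Complex.I) * (-(n:ℂ)) = (2 * (Real.pi:ℂ) * Complex.I) * ((k:ℂ) * q) := by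
        linear_combination (2 * (Real.pi:ℂ) * Complex.I) * hk
      have h4 : -(n:ℂ) = (k:ℂ) * q := mul_left_cancel₀ hne h3
      have h5 : ((n:ℤ):ℂ) = (((-k) * q : ℤ):ℂ) := by push_cast; linear_combination -h4
      have h6 : (n:ℤ) = (-k) * q := by exact_mod_cast h5
      have h7 : (q:ℤ) ∣ (n:ℤ) := ⟨-k, by linarith⟩
      exact_mod_cast h7
    have hsum : ∑ x ∈ Icc 1 q, z ^ x = z * ∑ x ∈ range q, z ^ x := by
      rw [← Finset.Ico_add_one_right_eq_Icc, Finset.sum_Ico_eq_sum_range]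
      simp only [Nat.add_sub_cancel, pow_add, pow_one]
      rw [Finset.mul_sum]
    rw [hsum, geom_sum_eq hz1, hzq]
    simp

noncomputable def toAF (f : ℕ → ℂ) : ArithmeticFunction ℂ :=
  ⟨fun n => if n = 0 then 0 else f n, rfl⟩

lemma moeConv_eq (f : ℕ → ℂ) (e : ℕ) :
    moeConv f e = (((ArithmeticFunction.moebius : ArithmeticFunction ℤ) : ArithmeticFunction ℂ) * toAF f) e := by
  rw [ArithmeticFunction.mul_apply]
  simp only [ArithmeticFunction.intCoe_apply]
  rw [Nat.sum_divisorsAntidiagonal (fun a b => (((ArithmeticFunction.moebius a : ℤ) : ℂ)) * toAF f b)]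
  apply Finset.sum_congr rfl
  intro a ha
  rw [Nat.mem_divisors] at ha
  have hne : e / a ≠ 0 := by
    have h1 := Nat.div_pos (Nat.le_of_dvd (Nat.pos_of_ne_zero ha.2) ha.1) (Nat.pos_of_dvd_of_pos ha.1 (Nat.pos_of_ne_zero ha.2))
    omega
  simp [toAF, hne, ArithmeticFunction.intCoe_apply]

lemma sum_moeConv (f : ℕ → ℂ) (d : ℕ) (hd : d ≠ 0) :
    ∑ e ∈ d.divisors, moeConv f e = f d := by
  simp only [moeConv_eq]
  rw [← ArithmeticFunction.coe_zeta_mul_apply, ← mul_assoc,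
    ArithmeticFunction.coe_zeta_mul_coe_moebius, one_mul]
  simp [toAF, hd]

lemma sum_divisors_mul_coprime {g1 g2 : ℕ} (h : Nat.Coprime g1 g2) (hg1 : g1 ≠ 0) (hg2 : g2 ≠ 0) (G : ℕ → ℂ) :
    ∑ d ∈ (g1 * g2).divisors, G d = ∑ d1 ∈ g1.divisors, ∑ d2 ∈ g2.divisors, G (d1 * d2) := by
  rw [← Finset.sum_product']
  apply Finset.sum_nbij' (i := fun d => (Nat.gcd d g1, Nat.gcd d g2)) (j := fun p => p.1 * p.2)
  · intro d hd
    rw [Nat.mem_divisors] at hd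
    simp only [Finset.mem_product, Nat.mem_divisors]
    exact ⟨⟨Nat.gcd_dvd_right _ _, hg1⟩, ⟨Nat.gcd_dvd_right _ _, hg2⟩⟩
  · rintro ⟨p1, p2⟩ hp
    simp only [Finset.mem_product, Nat.mem_divisors] at hp
    exact Nat.mem_divisors.mpr ⟨mul_dvd_mul hp.1.1 hp.2.1, mul_ne_zero hg1 hg2⟩
  · intro d hd
    rw [Nat.mem_divisors] at hd
    exact (Nat.gcd_mul_gcd_eq_iff_dvd_mul_of_coprime h).mpr hd.1
  · rintro ⟨p1, p2⟩ hp
    simp only [Finset.mem_product, Nat.mem_divisors] at hp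
    have c2 : Nat.Coprime p2 g1 := Nat.Coprime.coprime_dvd_left hp.2.1 h.symm
    have c1 : Nat.Coprime p1 g2 := Nat.Coprime.coprime_dvd_left hp.1.1 h
    have e1 : Nat.gcd (p1 * p2) g1 = p1 := by
      rw [Nat.Coprime.gcd_mul_right_cancel p1 c2]
      exact Nat.gcd_eq_left hp.1.1
    have e2 : Nat.gcd (p1 * p2) g2 = p2 := by
      rw [mul_comm, Nat.Coprime.gcd_mul_right_cancel p2 c1]
      exact Nat.gcd_eq_left hp.2.1
    simp [e1, e2]
  · intro d hd
    rw [Nat.mem_divisors] at hd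
    have : Nat.gcd d g1 * Nat.gcd d g2 = d := (Nat.gcd_mul_gcd_eq_iff_dvd_mul_of_coprime h).mpr hd.1
    simp [this]

lemma dft_master (f : ℕ → ℂ) {r : ℕ} (n : ℕ) (hr : r ≠ 0) (hf : IsREven r f) :
    dft r f n = ∑ d ∈ (Nat.gcd r n).divisors, (d:ℂ) * moeConv f (r / d) := by
  have key : ∀ e ∈ r.divisors,
      ∑ k ∈ (Icc 1 r).filter (fun k => e ∣ k),
        Complex.exp (-(2 * (Real.pi:ℂ) * Complex.I * (k:ℂ) * (n:ℂ) / (r:ℂ)))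
      = if (r / e) ∣ n then ((r / e : ℕ):ℂ) else 0 := by
    intro e he
    rw [Nat.mem_divisors] at he
    have he0 : e ≠ 0 := by rintro rfl; exact hr (Nat.eq_zero_of_zero_dvd he.1)
    have hre0 : r / e ≠ 0 := Nat.div_ne_zero_iff.mpr ⟨he0, Nat.le_of_dvd (Nat.pos_of_ne_zero hr) he.1⟩
    rw [← sum_exp_icc (r / e) n hre0]
    apply Finset.sum_nbij' (i := fun k => k / e) (j := fun j => e * j)
    · intro k hk
      simp only [mem_filter, mem_Icc] at hk
      simp only [mem_Icc]
      obtain ⟨⟨hk1, hk2⟩, hek⟩ := hk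
      exact ⟨Nat.one_le_div_iff (Nat.pos_of_ne_zero he0) |>.mpr (Nat.le_of_dvd (by omega) hek),
        Nat.div_le_div_right hk2⟩
    · intro j hj
      simp only [mem_Icc] at hj
      simp only [mem_filter, mem_Icc]
      refine ⟨⟨Nat.one_le_iff_ne_zero.mpr (Nat.mul_ne_zero he0 (by omega)), ?_⟩, Dvd.intro _ rfl⟩
      calc e * j ≤ e * (r / e) := Nat.mul_le_mul_left e hj.2
        _ = r := Nat.mul_div_cancel' he.1
    · intro k hk
      simp only [mem_filter] at hk
      exact Nat.mul_div_cancel' hk.2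
    · intro j hj
      exact Nat.mul_div_cancel_left j (Nat.pos_of_ne_zero he0)
    · intro k hk
      simp only [mem_filter, mem_Icc] at hk
      obtain ⟨⟨hk1, hk2⟩, t, rfl⟩ := hk
      have hce : ((r / e : ℕ):ℂ) = (r:ℂ) / (e:ℂ) := Nat.cast_div he.1 (Nat.cast_ne_zero.mpr he0)
      have hrc : (r:ℂ) ≠ 0 := Nat.cast_ne_zero.mpr hr
      have hec : (e:ℂ) ≠ 0 := Nat.cast_ne_zero.mpr he0
      congr 1
      rw [Nat.mul_div_cancel_left t (Nat.pos_of_ne_zero he0), hce]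
      push_cast
      field_simp
  calc dft r f n
      = ∑ k ∈ Icc 1 r, ∑ e ∈ r.divisors, (if e ∣ k then moeConv f e *
          Complex.exp (-(2 * (Real.pi:ℂ) * Complex.I * (k:ℂ) * (n:ℂ) / (r:ℂ))) else 0) := by
        apply Finset.sum_congr rfl
        intro k hk
        rw [mem_Icc] at hk
        rw [← Finset.sum_filter, ← Finset.sum_mul]
        congr 1
        have h1 : r.divisors.filter (fun e => e ∣ k) = (Nat.gcd k r).divisors := by
          ext e
          simp only [mem_filter, Nat.mem_divisors, Nat.dvd_gcd_iff]
          constructor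
          · rintro ⟨⟨h1, h2⟩, h3⟩; exact ⟨⟨h3, h1⟩, fun hc => hr (Nat.eq_zero_of_gcd_eq_zero_right hc)⟩
          · rintro ⟨⟨h1, h2⟩, h3⟩; exact ⟨⟨h2, hr⟩, h1⟩
        rw [h1, sum_moeConv f _ (fun hc => hr (Nat.eq_zero_of_gcd_eq_zero_right hc))]
        exact (hf k hk.1).symm
    _ = ∑ e ∈ r.divisors, moeConv f e * (if (r / e) ∣ n then ((r / e : ℕ):ℂ) else 0) := by
        rw [Finset.sum_comm]
        apply Finset.sum_congr rfl
        intro e he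
        rw [← key e he, Finset.mul_sum, ← Finset.sum_filter]
    _ = ∑ e ∈ r.divisors.filter (fun e => (r / e) ∣ n), moeConv f e * ((r / e : ℕ):ℂ) := by
        rw [Finset.sum_filter]
        apply Finset.sum_congr rfl
        intro e _
        rw [mul_ite, mul_zero]
    _ = ∑ d ∈ (Nat.gcd r n).divisors, (d:ℂ) * moeConv f (r / d) := by
        have hsets : (Nat.gcd r n).divisors = r.divisors.filter (fun d => d ∣ n) := by
          ext d
          simp only [mem_filter, Nat.mem_divisors, Nat.dvd_gcd_iff]
          constructor
          · rintro ⟨⟨h1, h2⟩, h3⟩; exact ⟨⟨h1, hr⟩, h2⟩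
          · rintro ⟨⟨h1, h2⟩, h3⟩; exact ⟨⟨h1, h3⟩, fun hc => hr (Nat.eq_zero_of_gcd_eq_zero_left hc)⟩
        rw [hsets]
        apply Finset.sum_nbij' (i := fun e => r / e) (j := fun d => r / d)
        · intro e he
          simp only [mem_filter, Nat.mem_divisors] at he ⊢
          exact ⟨⟨Nat.div_dvd_of_dvd he.1.1, hr⟩, he.2⟩
        · intro d hd
          simp only [mem_filter, Nat.mem_divisors] at hd ⊢
          refine ⟨⟨Nat.div_dvd_of_dvd hd.1.1, hr⟩, ?_⟩
          rw [Nat.div_div_self hd.1.1 hr]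
          exact hd.2
        · intro e he
          simp only [mem_filter, Nat.mem_divisors] at he
          exact Nat.div_div_self he.1.1 hr
        · intro d hd
          simp only [mem_filter, Nat.mem_divisors] at hd
          exact Nat.div_div_self hd.1.1 hr
        · intro e he
          simp only [mem_filter, Nat.mem_divisors] at he
          rw [Nat.div_div_self he.1.1 hr, mul_comm]

lemma decomp {r d : ℕ} (hr : r ≠ 0) (hd : d ∣ r) :
    ∃ a b, r = a * b ∧ d ∣ a ∧ Nat.Coprime a b ∧ ∀ p : ℕ, p.Prime → p ∣ a → p ∣ d := by
  have hd0 : d ≠ 0 := by rintro rfl; exact hr (Nat.eq_zero_of_zero_dvd hd)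
  set a := Nat.gcd (d ^ r) r with ha
  have har : a ∣ r := Nat.gcd_dvd_right _ _
  have ha0 : a ≠ 0 := Nat.gcd_ne_zero_right hr
  have hda : d ∣ a := Nat.dvd_gcd (dvd_pow_self d hr) hd
  have hprime : ∀ p : ℕ, p.Prime → p ∣ a → p ∣ d := fun p pp hp =>
    pp.dvd_of_dvd_pow (hp.trans (Nat.gcd_dvd_left _ _))
  refine ⟨a, r / a, (Nat.mul_div_cancel' har).symm, hda, ?_, hprime⟩
  by_contra hcop
  obtain ⟨p, pp, hpa, hpb⟩ := Nat.Prime.not_coprime_iff_dvd.mp hcop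
  have hpd : p ∣ d := hprime p pp hpa
  have hpar : p * a ∣ r := by have := (Nat.dvd_div_iff_mul_dvd har).mp hpb; rwa [mul_comm] at this
  have hadr : a ∣ d ^ r := Nat.gcd_dvd_left _ _
  have hap : a * p ∣ d ^ r := by
    rw [← Nat.factorization_le_iff_dvd (mul_ne_zero ha0 pp.ne_zero) (pow_ne_zero r hd0)]
    rw [Finsupp.le_def]
    intro q
    rw [Nat.factorization_mul ha0 pp.ne_zero, Finsupp.add_apply, Nat.factorization_pow]
    have hle : a.factorization q ≤ (d ^ r).factorization q := by
      have := (Nat.factorization_le_iff_dvd ha0 (pow_ne_zero r hd0)).mpr hadr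
      exact Finsupp.le_def.mp this q
    rw [Nat.factorization_pow] at hle
    simp only [Finsupp.smul_apply, smul_eq_mul] at hle ⊢
    have h4 : Nat.factorization p q = (if q = p then 1 else 0) := by
      rw [pp.factorization]; simp [Finsupp.single_apply, eq_comm]
    by_cases hqp : q = p
    · have h1 : a.factorization q ≤ r.factorization q :=
        Finsupp.le_def.mp ((Nat.factorization_le_iff_dvd ha0 hr).mpr har) q
      have h2 : r.factorization q < r := Nat.factorization_lt q hr
      have h3 : 1 ≤ d.factorization q := by
        subst hqp; exact Nat.Prime.factorization_pos_of_dvd pp hd0 hpd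
      have h5 : r ≤ r * d.factorization q := Nat.le_mul_of_pos_right r h3
      rw [h4, if_pos hqp]
      omega
    · rw [h4, if_neg hqp]
      omega
  have : p * a ∣ a := Nat.dvd_gcd (by rwa [mul_comm] at hap) hpar
  have hle := Nat.le_of_dvd (Nat.pos_of_ne_zero ha0) this
  nlinarith [pp.two_le, Nat.pos_of_ne_zero ha0]

section
variable (f : ℕ → ℕ → ℂ)
    (h1 : ∀ r : ℕ, 1 ≤ r → IsREven r (f r))
    (h2 : ∀ n : ℕ, 1 ≤ n → IsMult (fun r => f r n))

include h1 h2 in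
lemma fsplit {r1 r2 c1 c2 : ℕ} (hr1 : r1 ≠ 0) (hr2 : r2 ≠ 0) (hco : Nat.Coprime r1 r2)
    (hc1 : c1 ∣ r1) (hc2 : c2 ∣ r2) : f (r1 * r2) (c1 * c2) = f r1 c1 * f r2 c2 := by
  have hc10 : c1 ≠ 0 := by rintro rfl; exact hr1 (Nat.eq_zero_of_zero_dvd hc1)
  have hc20 : c2 ≠ 0 := by rintro rfl; exact hr2 (Nat.eq_zero_of_zero_dvd hc2)
  have hcc : 1 ≤ c1 * c2 := Nat.one_le_iff_ne_zero.mpr (mul_ne_zero hc10 hc20)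
  have hsplit : f (r1 * r2) (c1 * c2) = f r1 (c1 * c2) * f r2 (c1 * c2) :=
    (h2 (c1 * c2) hcc).2 r1 r2 (Nat.one_le_iff_ne_zero.mpr hr1) (Nat.one_le_iff_ne_zero.mpr hr2) hco
  have e1 : f r1 (c1 * c2) = f r1 c1 := by
    rw [← h1 r1 (Nat.one_le_iff_ne_zero.mpr hr1) (c1 * c2) hcc]
    congr 1
    rw [Nat.Coprime.gcd_mul_right_cancel c1 (Nat.Coprime.coprime_dvd_left hc2 hco.symm)]
    exact Nat.gcd_eq_left hc1
  have e2 : f r2 (c1 * c2) = f r2 c2 := by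
    rw [← h1 r2 (Nat.one_le_iff_ne_zero.mpr hr2) (c1 * c2) hcc]
    congr 1
    rw [mul_comm, Nat.Coprime.gcd_mul_right_cancel c2 (Nat.Coprime.coprime_dvd_left hc1 hco)]
    exact Nat.gcd_eq_left hc2
  rw [hsplit, e1, e2]

include h1 h2 in
lemma moeConv_split {r1 r2 e1 e2 : ℕ} (hr1 : r1 ≠ 0) (hr2 : r2 ≠ 0) (hco : Nat.Coprime r1 r2)
    (he1 : e1 ∣ r1) (he2 : e2 ∣ r2) :
    moeConv (f (r1 * r2)) (e1 * e2) = moeConv (f r1) e1 * moeConv (f r2) e2 := by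
  have he10 : e1 ≠ 0 := by rintro rfl; exact hr1 (Nat.eq_zero_of_zero_dvd he1)
  have he20 : e2 ≠ 0 := by rintro rfl; exact hr2 (Nat.eq_zero_of_zero_dvd he2)
  have hcoe : Nat.Coprime e1 e2 :=
    Nat.Coprime.coprime_dvd_right he2 (Nat.Coprime.coprime_dvd_left he1 hco)
  unfold moeConv
  rw [sum_divisors_mul_coprime hcoe he10 he20, Finset.sum_mul_sum]
  apply Finset.sum_congr rfl
  intro d1 hd1
  apply Finset.sum_congr rfl
  intro d2 hd2
  rw [Nat.mem_divisors] at hd1 hd2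
  have hcod : Nat.Coprime d1 d2 :=
    Nat.Coprime.coprime_dvd_right hd2.1 (Nat.Coprime.coprime_dvd_left hd1.1 hcoe)
  have hmu : (ArithmeticFunction.moebius (d1 * d2) : ℤ) =
      ArithmeticFunction.moebius d1 * ArithmeticFunction.moebius d2 :=
    ArithmeticFunction.isMultiplicative_moebius.map_mul_of_coprime hcod
  have hdiv : e1 * e2 / (d1 * d2) = (e1 / d1) * (e2 / d2) :=
    (Nat.div_mul_div_comm hd1.1 hd2.1).symm
  rw [hmu, hdiv, fsplit f h1 h2 hr1 hr2 hco ((Nat.div_dvd_of_dvd hd1.1).trans he1)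
    ((Nat.div_dvd_of_dvd hd2.1).trans he2)]
  push_cast
  ring

include h1 h2 in
lemma keyF {r d1 d2 : ℕ} (hr : r ≠ 0) (hd1 : d1 ∣ r) (hd2 : d2 ∣ r) (hco : Nat.Coprime d1 d2) :
    moeConv (f r) (r / d1) * moeConv (f r) (r / d2) =
      moeConv (f r) r * moeConv (f r) (r / (d1 * d2)) := by
  obtain ⟨a, b, hab, hda, hcoab, hprime⟩ := decomp hr hd1
  subst hab
  have ha0 : a ≠ 0 := by rintro rfl; exact hr (zero_mul b)
  have hb0 : b ≠ 0 := by rintro rfl; exact hr (mul_zero a)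
  have hcoad2 : Nat.Coprime a d2 := by
    by_contra hc
    obtain ⟨p, pp, hpa, hpd2⟩ := Nat.Prime.not_coprime_iff_dvd.mp hc
    have hpd1 := hprime p pp hpa
    have hp1 : p ∣ 1 := hco ▸ Nat.dvd_gcd hpd1 hpd2
    exact pp.ne_one (Nat.eq_one_of_dvd_one hp1)
  have hd2b : d2 ∣ b := Nat.Coprime.dvd_of_dvd_mul_left hcoad2.symm hd2
  have h1e : a * b / d1 = (a / d1) * b := by
    rw [mul_comm a b, Nat.mul_div_assoc b hda, mul_comm]
  have h2e : a * b / d2 = a * (b / d2) := Nat.mul_div_assoc a hd2b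
  have h3e : a * b / (d1 * d2) = (a / d1) * (b / d2) :=
    (Nat.div_mul_div_comm hda hd2b).symm
  rw [h1e, h2e, h3e,
    moeConv_split f h1 h2 ha0 hb0 hcoab (Nat.div_dvd_of_dvd hda) (dvd_refl b),
    moeConv_split f h1 h2 ha0 hb0 hcoab (dvd_refl a) (Nat.div_dvd_of_dvd hd2b),
    moeConv_split f h1 h2 ha0 hb0 hcoab (dvd_refl a) (dvd_refl b),
    moeConv_split f h1 h2 ha0 hb0 hcoab (Nat.div_dvd_of_dvd hda) (Nat.div_dvd_of_dvd hd2b)]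
  ring

include h1 h2 in
lemma dft_index_mul {r s : ℕ} (K : ℕ) (hr : r ≠ 0) (hs : s ≠ 0) (hco : Nat.Coprime r s) :
    dft (r * s) (f (r * s)) K = dft r (f r) K * dft s (f s) K := by
  rw [dft_master (f (r * s)) K (mul_ne_zero hr hs)
      (h1 (r * s) (Nat.one_le_iff_ne_zero.mpr (mul_ne_zero hr hs))),
    dft_master (f r) K hr (h1 r (Nat.one_le_iff_ne_zero.mpr hr)),
    dft_master (f s) K hs (h1 s (Nat.one_le_iff_ne_zero.mpr hs))]
  have hg : Nat.gcd (r * s) K = Nat.gcd r K * Nat.gcd s K := by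
    rw [Nat.gcd_comm, Nat.Coprime.gcd_mul K hco, Nat.gcd_comm K r, Nat.gcd_comm K s]
  have hcog : Nat.Coprime (Nat.gcd r K) (Nat.gcd s K) :=
    Nat.Coprime.coprime_dvd_right (Nat.gcd_dvd_left s K)
      (Nat.Coprime.coprime_dvd_left (Nat.gcd_dvd_left r K) hco)
  rw [hg, sum_divisors_mul_coprime hcog (Nat.gcd_ne_zero_left hr) (Nat.gcd_ne_zero_left hs),
    Finset.sum_mul_sum]
  apply Finset.sum_congr rfl
  intro d1 hd1
  apply Finset.sum_congr rfl
  intro d2 hd2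
  rw [Nat.mem_divisors] at hd1 hd2
  have hd1r : d1 ∣ r := hd1.1.trans (Nat.gcd_dvd_left r K)
  have hd2s : d2 ∣ s := hd2.1.trans (Nat.gcd_dvd_left s K)
  have hdd : r * s / (d1 * d2) = (r / d1) * (s / d2) := (Nat.div_mul_div_comm hd1r hd2s).symm
  rw [hdd, moeConv_split f h1 h2 hr hs hco (Nat.div_dvd_of_dvd hd1r) (Nat.div_dvd_of_dvd hd2s)]
  push_cast
  ring

include h1 h2 in
lemma dft_gcd_only {r : ℕ} (N M : ℕ) (hr : r ≠ 0) (hg : Nat.gcd r N = Nat.gcd r M) :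
    dft r (f r) N = dft r (f r) M := by
  rw [dft_master (f r) N hr (h1 r (Nat.one_le_iff_ne_zero.mpr hr)),
    dft_master (f r) M hr (h1 r (Nat.one_le_iff_ne_zero.mpr hr)), hg]

include h1 h2 in
lemma part3 (m n r : ℕ) (hm : 1 ≤ m) (hn : 1 ≤ n) (hr : 1 ≤ r) (hco : Nat.Coprime m n) :
    dft r (f r) m * dft r (f r) n = moeConv (f r) r * dft r (f r) (m * n) := by
  have hr0 : r ≠ 0 := Nat.one_le_iff_ne_zero.mp hr
  rw [dft_master (f r) m hr0 (h1 r hr), dft_master (f r) n hr0 (h1 r hr),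
    dft_master (f r) (m * n) hr0 (h1 r hr)]
  have hg : Nat.gcd r (m * n) = Nat.gcd r m * Nat.gcd r n := Nat.Coprime.gcd_mul r hco
  have hcog : Nat.Coprime (Nat.gcd r m) (Nat.gcd r n) :=
    Nat.Coprime.coprime_dvd_right (Nat.gcd_dvd_right r n)
      (Nat.Coprime.coprime_dvd_left (Nat.gcd_dvd_right r m) hco)
  rw [hg, sum_divisors_mul_coprime hcog (Nat.gcd_ne_zero_left hr0) (Nat.gcd_ne_zero_left hr0),
    Finset.sum_mul_sum]
  simp only [Finset.mul_sum]
  apply Finset.sum_congr rfl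
  intro d1 hd1
  apply Finset.sum_congr rfl
  intro d2 hd2
  rw [Nat.mem_divisors] at hd1 hd2
  have hd1r : d1 ∣ r := hd1.1.trans (Nat.gcd_dvd_left r m)
  have hd2r : d2 ∣ r := hd2.1.trans (Nat.gcd_dvd_left r n)
  have hcod : Nat.Coprime d1 d2 :=
    Nat.Coprime.coprime_dvd_right (hd2.1.trans (Nat.gcd_dvd_right r n))
      (Nat.Coprime.coprime_dvd_left (hd1.1.trans (Nat.gcd_dvd_right r m)) hco)
  have hkey := keyF f h1 h2 hr0 hd1r hd2r hcod
  push_cast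
  linear_combination (d1:ℂ) * (d2:ℂ) * hkey

include h1 h2 in
lemma dft_one_eq {r : ℕ} (hr : r ≠ 0) : dft r (f r) 1 = moeConv (f r) r := by
  rw [dft_master (f r) 1 hr (h1 r (Nat.one_le_iff_ne_zero.mpr hr))]
  simp [Nat.gcd_one_right]

end

/-- For a sequence `(f_r)` of `r`-even functions with `r ↦ f_r(n)` multiplicative:
(1) `r ↦ f̂_r(n)` is multiplicative; (2) `(n,r) ↦ f̂_r(n)` is multiplicative as a function of
two variables; (3) `f̂_r(m) f̂_r(n) = f'_r(r) f̂_r(mn)` whenever `gcd(m,n) = 1`;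
(4) `n ↦ f̂_r(n)` is multiplicative iff `f'_r(r) = 1`. -/
theorem dft_stmt_14 (f : ℕ → ℕ → ℂ)
    (h1 : ∀ r : ℕ, 1 ≤ r → IsREven r (f r))
    (h2 : ∀ n : ℕ, 1 ≤ n → IsMult (fun r => f r n)) :
    (∀ n : ℕ, 1 ≤ n → IsMult (fun r => dft r (f r) n)) ∧
    (∀ m n r s : ℕ, 1 ≤ m → 1 ≤ n → 1 ≤ r → 1 ≤ s → Nat.Coprime (m * r) (n * s) →
        dft (r * s) (f (r * s)) (m * n) = dft r (f r) m * dft s (f s) n) ∧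
    (∀ m n r : ℕ, 1 ≤ m → 1 ≤ n → 1 ≤ r → Nat.Coprime m n →
        dft r (f r) m * dft r (f r) n = moeConv (f r) r * dft r (f r) (m * n)) ∧
    (∀ r : ℕ, 1 ≤ r → (IsMult (dft r (f r)) ↔ moeConv (f r) r = 1)) := by
  have hdft1 : ∀ n : ℕ, dft 1 (f 1) n = 1 := by
    intro n
    rw [dft_master (f 1) n one_ne_zero (h1 1 le_rfl)]
    have hf11 : f 1 1 = 1 := (h2 1 le_rfl).1
    simp [Nat.gcd_one_left, moeConv, hf11]
  refine ⟨?_, ?_, ?_, ?_⟩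
  · intro n hn
    refine ⟨hdft1 n, ?_⟩
    intro r s hr hs hco
    exact dft_index_mul f h1 h2 n (Nat.one_le_iff_ne_zero.mp hr)
      (Nat.one_le_iff_ne_zero.mp hs) hco
  · intro m n r s hm hn hr hs hco
    have hrs : Nat.Coprime r s :=
      Nat.Coprime.coprime_dvd_right (dvd_mul_left s n)
        (Nat.Coprime.coprime_dvd_left (dvd_mul_left r m) hco)
    have hrn : Nat.Coprime r n :=
      Nat.Coprime.coprime_dvd_right (dvd_mul_right n s)
        (Nat.Coprime.coprime_dvd_left (dvd_mul_left r m) hco)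
    have hsm : Nat.Coprime m s :=
      Nat.Coprime.coprime_dvd_right (dvd_mul_left s n)
        (Nat.Coprime.coprime_dvd_left (dvd_mul_right m r) hco)
    have hr0 : r ≠ 0 := Nat.one_le_iff_ne_zero.mp hr
    have hs0 : s ≠ 0 := Nat.one_le_iff_ne_zero.mp hs
    rw [dft_index_mul f h1 h2 (m * n) hr0 hs0 hrs]
    have e1 : dft r (f r) (m * n) = dft r (f r) m := by
      apply dft_gcd_only f h1 h2 (m * n) m hr0
      rw [Nat.gcd_comm r (m * n), Nat.Coprime.gcd_mul_right_cancel m hrn.symm, Nat.gcd_comm]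
    have e2 : dft s (f s) (m * n) = dft s (f s) n := by
      apply dft_gcd_only f h1 h2 (m * n) n hs0
      rw [Nat.gcd_comm s (m * n), mul_comm m n, Nat.Coprime.gcd_mul_right_cancel n hsm,
        Nat.gcd_comm]
    rw [e1, e2]
  · intro m n r hm hn hr hco
    exact part3 f h1 h2 m n r hm hn hr hco
  · intro r hr
    have hr0 : r ≠ 0 := Nat.one_le_iff_ne_zero.mp hr
    constructor
    · intro hmult
      rw [← dft_one_eq f h1 h2 hr0]
      exact hmult.1
    · intro hF
      refine ⟨by rw [dft_one_eq f h1 h2 hr0, hF], ?_⟩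
      intro m n hm hn hco
      have := part3 f h1 h2 m n r hm hn hr hco
      rw [hF, one_mul] at this
      exact this.symm
end

section
/- Let F be an arithmetic function and let (f_r)_{r≥1} be the completely even sequence f_r(n) = F(gcd(n,r)). Then for all n, r ≥ 1: Σ_{d|r} f̂_d(n) = Σ_{d | gcd(n,r)} d · f_r(r/d) = Σ_{d | gcd(n,r)} d · F(r/d), and moreover Σ_{d|n} Σ_{e|r} f̂_e(d) = Σ_{d | gcd(n,r)} d · F(r/d) · τ(n/d), where τ is the number-of-divisors function. -/
open Finset

section Aux

lemma sum_exp_eq (m N : ℕ) (hm : 1 ≤ m) :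
    ∑ k ∈ Finset.Icc 1 m,
      Complex.exp (-(2 * (Real.pi : ℂ) * Complex.I * (k : ℂ) * (N : ℂ) / (m : ℂ))) =
      if m ∣ N then (m : ℂ) else 0 := by
  have hm0 : (m : ℂ) ≠ 0 := Nat.cast_ne_zero.mpr (by omega)
  set z : ℂ := Complex.exp (-(2 * (Real.pi : ℂ) * Complex.I * (N : ℂ) / (m : ℂ))) with hz
  have hterm : ∀ k : ℕ,
      Complex.exp (-(2 * (Real.pi : ℂ) * Complex.I * (k : ℂ) * (N : ℂ) / (m : ℂ))) = z ^ k := by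
    intro k
    rw [hz, ← Complex.exp_nat_mul]
    congr 1
    ring
  simp only [hterm]
  have h2pi : (2 * (Real.pi : ℂ) * Complex.I) ≠ 0 := by
    simp [Real.pi_ne_zero, Complex.I_ne_zero, Complex.ofReal_ne_zero]
  by_cases h : m ∣ N
  · obtain ⟨t, rfl⟩ := h
    have hz1 : z = 1 := by
      rw [hz]
      have heq : -(2 * (Real.pi : ℂ) * Complex.I * ((m * t : ℕ) : ℂ) / (m : ℂ))
          = ((-(t : ℤ)) : ℂ) * (2 * (Real.pi : ℂ) * Complex.I) := by
        push_cast
        field_simp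
      rw [heq]
      exact_mod_cast Complex.exp_int_mul_two_pi_mul_I (-(t : ℤ))
    simp [hz1, Nat.card_Icc]
  · have hzm : z ^ m = 1 := by
      rw [hz, ← Complex.exp_nat_mul]
      have heq : (m : ℂ) * -(2 * (Real.pi : ℂ) * Complex.I * (N : ℂ) / (m : ℂ))
          = ((-(N : ℤ)) : ℂ) * (2 * (Real.pi : ℂ) * Complex.I) := by
        push_cast
        field_simp
      rw [heq]
      exact_mod_cast Complex.exp_int_mul_two_pi_mul_I (-(N : ℤ))
    have hz1 : z ≠ 1 := by
      intro hcon
      apply h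
      rw [hz, Complex.exp_eq_one_iff] at hcon
      obtain ⟨t, ht⟩ := hcon
      field_simp at ht
      have hNC : (2 * (Real.pi : ℂ) * Complex.I) * (-(N : ℂ))
          = (2 * (Real.pi : ℂ) * Complex.I) * ((t : ℂ) * (m : ℂ)) := by
        linear_combination (2 * (Real.pi : ℂ) * Complex.I) * ht
      have hN : (-(N : ℂ)) = (t : ℂ) * (m : ℂ) := mul_left_cancel₀ h2pi hNC
      have hNZ : (N : ℤ) = (m : ℤ) * (-t) := by
        have : ((N : ℤ) : ℂ) = (((m : ℤ) * (-t) : ℤ) : ℂ) := by push_cast; linear_combination -hN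
        exact_mod_cast this
      exact Int.natCast_dvd_natCast.mp ⟨-t, hNZ⟩
    have hsum : ∑ k ∈ Finset.Icc 1 m, z ^ k = 0 := by
      have h1 : ∑ k ∈ Finset.range m, z ^ k = 0 := by
        rw [geom_sum_eq hz1]
        simp [hzm]
      have h2 : ∑ k ∈ Finset.Icc 1 m, z ^ k = z * ∑ k ∈ Finset.range m, z ^ k := by
        rw [← Finset.Ico_add_one_right_eq_Icc, Finset.sum_Ico_eq_sum_range, Finset.mul_sum]
        simp [pow_add, pow_one]
      rw [h2, h1, mul_zero]
    simp [h, hsum]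

lemma moe_inv (F : ℕ → ℂ) : ∀ N : ℕ, 0 < N → ∑ e ∈ N.divisors, moeConv F e = F N := by
  rw [ArithmeticFunction.sum_eq_iff_sum_smul_moebius_eq]
  intro n hn
  rw [Nat.sum_divisorsAntidiagonal (f := fun a b => (ArithmeticFunction.moebius a : ℤ) • F b)]
  simp [moeConv, zsmul_eq_mul]

lemma divisors_gcd_eq (a b : ℕ) (hb : b ≠ 0) :
    (Nat.gcd a b).divisors = b.divisors.filter (fun d => d ∣ a) := by
  ext e
  simp only [Nat.mem_divisors, Finset.mem_filter]
  constructor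
  · intro ⟨h1, _⟩
    exact ⟨⟨(Nat.dvd_gcd_iff.mp h1).2, hb⟩, (Nat.dvd_gcd_iff.mp h1).1⟩
  · intro ⟨⟨h1, _⟩, h2⟩
    exact ⟨Nat.dvd_gcd h2 h1, Nat.gcd_ne_zero_right hb⟩

lemma divisors_eq_filter (d r : ℕ) (hr : r ≠ 0) (hd : d ∣ r) :
    d.divisors = r.divisors.filter (fun e => e ∣ d) := by
  have hd0 : d ≠ 0 := by rintro rfl; exact hr (Nat.eq_zero_of_zero_dvd hd)
  ext e
  simp only [Nat.mem_divisors, Finset.mem_filter]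
  exact ⟨fun ⟨h1, _⟩ => ⟨⟨h1.trans hd, hr⟩, h1⟩, fun ⟨_, h2⟩ => ⟨h2, hd0⟩⟩

lemma divisors_filter_mul (N m : ℕ) (hN : N ≠ 0) (hm : m ∣ N) :
    N.divisors.filter (fun d => m ∣ d) = (N / m).divisors.image (fun c => m * c) := by
  have hm0 : m ≠ 0 := by rintro rfl; exact hN (Nat.eq_zero_of_zero_dvd hm)
  have hNm : N / m ≠ 0 := Nat.div_ne_zero_iff.mpr ⟨hm0, Nat.le_of_dvd (Nat.pos_of_ne_zero hN) hm⟩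
  ext d
  simp only [Nat.mem_divisors, Finset.mem_filter, Finset.mem_image]
  constructor
  · intro ⟨⟨hdN, _⟩, hmd⟩
    obtain ⟨c, rfl⟩ := hmd
    refine ⟨c, ⟨?_, hNm⟩, rfl⟩
    obtain ⟨t, rfl⟩ := hm
    rw [Nat.mul_div_cancel_left t (Nat.pos_of_ne_zero hm0)]
    exact (mul_dvd_mul_iff_left hm0).mp hdN
  · rintro ⟨c, ⟨hc, _⟩, rfl⟩
    refine ⟨⟨?_, hN⟩, Dvd.intro c rfl⟩
    calc m * c ∣ m * (N / m) := mul_dvd_mul_left m hc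
      _ = N := Nat.mul_div_cancel' hm

lemma Icc_filter_dvd (d e : ℕ) (hd : d ≠ 0) (he : e ∣ d) :
    (Finset.Icc 1 d).filter (fun k => e ∣ k) = (Finset.Icc 1 (d / e)).image (fun j => e * j) := by
  have he0 : e ≠ 0 := by rintro rfl; exact hd (Nat.eq_zero_of_zero_dvd he)
  have hep : 0 < e := Nat.pos_of_ne_zero he0
  ext k
  simp only [Finset.mem_filter, Finset.mem_Icc, Finset.mem_image]
  constructor
  · intro ⟨⟨h1, h2⟩, hek⟩
    obtain ⟨j, rfl⟩ := hek
    have hj0 : j ≠ 0 := by rintro rfl; simp at h1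
    exact ⟨j, ⟨Nat.one_le_iff_ne_zero.mpr hj0,
      (Nat.le_div_iff_mul_le hep).mpr (by rw [mul_comm]; exact h2)⟩, rfl⟩
  · rintro ⟨j, ⟨hj1, hj2⟩, rfl⟩
    have h := (Nat.le_div_iff_mul_le hep).mp hj2
    exact ⟨⟨Nat.mul_pos hep (by omega), by rw [mul_comm]; exact h⟩, Dvd.intro j rfl⟩

lemma dft_eq (F : ℕ → ℂ) (d n : ℕ) (hd : 1 ≤ d) :
    dft d (fun m => F (Nat.gcd m d)) n =
      ∑ m ∈ d.divisors, moeConv F (d / m) * (if m ∣ n then (m : ℂ) else 0) := by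
  have hd0 : d ≠ 0 := by omega
  simp only [dft]
  calc
    ∑ k ∈ Finset.Icc 1 d, F (Nat.gcd k d) *
        Complex.exp (-(2 * (Real.pi : ℂ) * Complex.I * (k : ℂ) * (n : ℂ) / (d : ℂ)))
      = ∑ k ∈ Finset.Icc 1 d, ∑ e ∈ d.divisors.filter (fun e => e ∣ k),
          moeConv F e * Complex.exp (-(2 * (Real.pi : ℂ) * Complex.I * (k : ℂ) * (n : ℂ) / (d : ℂ))) := by
        refine Finset.sum_congr rfl fun k hk => ?_
        rw [← Finset.sum_mul]
        congr 1
        rw [← divisors_gcd_eq k d hd0]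
        exact (moe_inv F _ (Nat.gcd_pos_of_pos_right k (by omega))).symm
    _ = ∑ e ∈ d.divisors, ∑ k ∈ Finset.Icc 1 d,
          if e ∣ k then moeConv F e * Complex.exp (-(2 * (Real.pi : ℂ) * Complex.I * (k : ℂ) * (n : ℂ) / (d : ℂ))) else 0 := by
        rw [← Finset.sum_comm]
        exact Finset.sum_congr rfl fun k _ => Finset.sum_filter _ _
    _ = ∑ e ∈ d.divisors, moeConv F e * (if (d / e) ∣ n then ((d / e : ℕ) : ℂ) else 0) := by
        refine Finset.sum_congr rfl fun e he => ?_
        obtain ⟨hed, -⟩ := Nat.mem_divisors.mp he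
        have he0 : e ≠ 0 := by rintro rfl; exact hd0 (Nat.eq_zero_of_zero_dvd hed)
        have heC : (e : ℂ) ≠ 0 := Nat.cast_ne_zero.mpr he0
        have hde : 1 ≤ d / e := Nat.div_pos (Nat.le_of_dvd (by omega) hed) (Nat.pos_of_ne_zero he0)
        have hdeC : ((d / e : ℕ) : ℂ) ≠ 0 := Nat.cast_ne_zero.mpr (by omega)
        rw [← Finset.sum_filter, Icc_filter_dvd d e hd0 hed,
          Finset.sum_image (fun x _ y _ h => mul_left_cancel₀ he0 h), ← Finset.mul_sum]
        congr 1
        rw [← sum_exp_eq (d / e) n hde]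
        refine Finset.sum_congr rfl fun j _ => ?_
        congr 1
        have hcast : (d : ℂ) = (e : ℂ) * ((d / e : ℕ) : ℂ) := by
          rw [← Nat.cast_mul, Nat.mul_div_cancel' hed]
        rw [hcast]
        push_cast
        field_simp
    _ = ∑ m ∈ d.divisors, moeConv F (d / m) * (if m ∣ n then (m : ℂ) else 0) := by
        rw [← Nat.sum_div_divisors d (fun m => moeConv F (d / m) * (if m ∣ n then (m : ℂ) else 0))]
        refine Finset.sum_congr rfl fun e he => ?_
        obtain ⟨hed, -⟩ := Nat.mem_divisors.mp he
        rw [Nat.div_div_self hed hd0]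

lemma sum_dft (F : ℕ → ℂ) (n r : ℕ) (hr : 1 ≤ r) :
    ∑ d ∈ r.divisors, dft d (fun m => F (Nat.gcd m d)) n =
      ∑ m ∈ (Nat.gcd n r).divisors, (m : ℂ) * F (r / m) := by
  have hr0 : r ≠ 0 := by omega
  calc
    ∑ d ∈ r.divisors, dft d (fun m => F (Nat.gcd m d)) n
      = ∑ d ∈ r.divisors, ∑ m ∈ r.divisors,
          if m ∣ d then moeConv F (d / m) * (if m ∣ n then (m : ℂ) else 0) else 0 := by
        refine Finset.sum_congr rfl fun d hd => ?_
        obtain ⟨hdr, -⟩ := Nat.mem_divisors.mp hd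
        rw [dft_eq F d n (Nat.pos_of_mem_divisors hd), divisors_eq_filter d r hr0 hdr,
          Finset.sum_filter]
    _ = ∑ m ∈ r.divisors, ∑ d ∈ r.divisors,
          if m ∣ d then moeConv F (d / m) * (if m ∣ n then (m : ℂ) else 0) else 0 :=
        Finset.sum_comm
    _ = ∑ m ∈ r.divisors, (if m ∣ n then (m : ℂ) else 0) * F (r / m) := by
        refine Finset.sum_congr rfl fun m hm => ?_
        obtain ⟨hmr, -⟩ := Nat.mem_divisors.mp hm
        have hm0 : m ≠ 0 := by rintro rfl; exact hr0 (Nat.eq_zero_of_zero_dvd hmr)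
        have hrm : 0 < r / m := Nat.div_pos (Nat.le_of_dvd (by omega) hmr) (Nat.pos_of_ne_zero hm0)
        rw [← Finset.sum_filter, divisors_filter_mul r m hr0 hmr,
          Finset.sum_image (fun x _ y _ h => mul_left_cancel₀ hm0 h)]
        calc
          ∑ c ∈ (r / m).divisors, moeConv F ((m * c) / m) * (if m ∣ n then (m : ℂ) else 0)
            = (∑ c ∈ (r / m).divisors, moeConv F c) * (if m ∣ n then (m : ℂ) else 0) := by
              rw [Finset.sum_mul]
              refine Finset.sum_congr rfl fun c _ => ?_
              rw [Nat.mul_div_cancel_left c (Nat.pos_of_ne_zero hm0)]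
          _ = (if m ∣ n then (m : ℂ) else 0) * F (r / m) := by
              rw [moe_inv F (r / m) hrm, mul_comm]
    _ = ∑ m ∈ (Nat.gcd n r).divisors, (m : ℂ) * F (r / m) := by
        rw [divisors_gcd_eq n r hr0, Finset.sum_filter]
        refine Finset.sum_congr rfl fun m _ => ?_
        split <;> simp

end Aux

/-- For the completely even sequence `f_r(n) = F(gcd(n,r))`:
`Σ_{d|r} f̂_d(n) = Σ_{d | gcd(n,r)} d·f_r(r/d) = Σ_{d | gcd(n,r)} d·F(r/d)`, and
`Σ_{d|n} Σ_{e|r} f̂_e(d) = Σ_{d | gcd(n,r)} d·F(r/d)·τ(n/d)`. -/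
theorem dft_stmt_15 (F : ℕ → ℂ) (n r : ℕ) (hn : 1 ≤ n) (hr : 1 ≤ r) :
    (∑ d ∈ r.divisors, dft d (fun m => F (Nat.gcd m d)) n =
      ∑ d ∈ (Nat.gcd n r).divisors, (d : ℂ) * F (Nat.gcd (r / d) r)) ∧
    (∑ d ∈ (Nat.gcd n r).divisors, (d : ℂ) * F (Nat.gcd (r / d) r) =
      ∑ d ∈ (Nat.gcd n r).divisors, (d : ℂ) * F (r / d)) ∧
    (∑ d ∈ n.divisors, ∑ e ∈ r.divisors, dft e (fun m => F (Nat.gcd m e)) d =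
      ∑ d ∈ (Nat.gcd n r).divisors, (d : ℂ) * F (r / d) * (((n / d).divisors.card : ℕ) : ℂ)) := by
  have hr0 : r ≠ 0 := by omega
  have hn0 : n ≠ 0 := by omega
  have eq2 : ∑ d ∈ (Nat.gcd n r).divisors, (d : ℂ) * F (Nat.gcd (r / d) r) =
      ∑ d ∈ (Nat.gcd n r).divisors, (d : ℂ) * F (r / d) := by
    refine Finset.sum_congr rfl fun d hd => ?_
    obtain ⟨hdg, -⟩ := Nat.mem_divisors.mp hd
    have hdr : d ∣ r := hdg.trans (Nat.gcd_dvd_right n r)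
    rw [Nat.gcd_eq_left (Nat.div_dvd_of_dvd hdr)]
  refine ⟨by rw [sum_dft F n r hr, eq2], eq2, ?_⟩
  calc
    ∑ d ∈ n.divisors, ∑ e ∈ r.divisors, dft e (fun m => F (Nat.gcd m e)) d
      = ∑ d ∈ n.divisors, ∑ m ∈ r.divisors, (if m ∣ d then (m : ℂ) * F (r / m) else 0) := by
        refine Finset.sum_congr rfl fun d hd => ?_
        rw [sum_dft F d r hr, divisors_gcd_eq d r hr0, Finset.sum_filter]
    _ = ∑ m ∈ r.divisors, ∑ d ∈ n.divisors, (if m ∣ d then (m : ℂ) * F (r / m) else 0) :=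
        Finset.sum_comm
    _ = ∑ m ∈ r.divisors,
          (if m ∣ n then (m : ℂ) * F (r / m) * (((n / m).divisors.card : ℕ) : ℂ) else 0) := by
        refine Finset.sum_congr rfl fun m hm => ?_
        obtain ⟨hmr, -⟩ := Nat.mem_divisors.mp hm
        have hm0 : m ≠ 0 := by rintro rfl; exact hr0 (Nat.eq_zero_of_zero_dvd hmr)
        rw [← Finset.sum_filter, Finset.sum_const, nsmul_eq_mul]
        by_cases hmn : m ∣ n
        · rw [divisors_filter_mul n m hn0 hmn,
            Finset.card_image_of_injective _ (mul_right_injective₀ hm0)]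
          rw [if_pos hmn]
          ring
        · have hemp : n.divisors.filter (fun d => m ∣ d) = ∅ := by
            refine Finset.filter_eq_empty_iff.mpr fun d hd hmd => hmn ?_
            exact hmd.trans (Nat.mem_divisors.mp hd).1
          rw [hemp, if_neg hmn]
          simp
    _ = ∑ d ∈ (Nat.gcd n r).divisors, (d : ℂ) * F (r / d) * (((n / d).divisors.card : ℕ) : ℂ) := by
        rw [divisors_gcd_eq n r hr0, Finset.sum_filter]
end

section
/- Let F be an arithmetic function and let (f_r)_{r≥1} be the completely even sequence f_r(n) = F(gcd(n,r)). Then for every r ≥ 1, Σ_{d|r} f̂_{r/d}(d) = Σ_{e,k ≥ 1, e²k = r} e · F(k). In particular, taking F = ε (ε(1)=1 and ε(n)=0 for n>1), Σ_{d|r} c_{r/d}(d) = √r if r is a perfect square and 0 otherwise. -/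
open Finset
set_option maxHeartbeats 1000000

noncomputable def Ee (ε : ℤ) (q n k : ℕ) : ℂ :=
  Complex.exp ((ε:ℂ) * (2 * (Real.pi:ℂ) * Complex.I * k * n / q))

lemma sum_moeConv_s16 (F : ℕ → ℂ) (N : ℕ) (hN : 0 < N) :
    ∑ b ∈ N.divisors, moeConv F b = F N := by
  have h := (ArithmeticFunction.sum_eq_iff_sum_smul_moebius_eq (f := moeConv F) (g := F)).mpr
  refine h ?_ N hN
  intro n hn
  rw [Nat.sum_divisorsAntidiagonal (fun d e => (ArithmeticFunction.moebius d : ℤ) • F e)]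
  simp [moeConv, zsmul_eq_mul]

lemma sum_pow_eq (q : ℕ) (hq : 0 < q) (w : ℂ) (hw : w ^ q = 1) :
    ∑ k ∈ Finset.Icc 1 q, w ^ k = if w = 1 then (q : ℂ) else 0 := by
  split_ifs with h
  · simp [h]
  · have : ∑ k ∈ Finset.Icc 1 q, w ^ k = w * ∑ k ∈ Finset.range q, w ^ k := by
      rw [Finset.mul_sum]
      rw [show Finset.Icc 1 q = Finset.Icc (0+1) ((q-1)+1) by congr 1; omega]
      rw [← Finset.map_add_right_Icc 0 (q-1) 1, Finset.sum_map]
      rw [show Finset.Icc 0 (q-1) = Finset.range q by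
        ext x; simp [Nat.lt_iff_le_pred hq]]
      exact Finset.sum_congr rfl fun x _ => by simp [pow_succ, mul_comm]
    rw [this, geom_sum_eq h, hw]
    simp

lemma exp_eq_one_iff_dvd (n Q : ℕ) (hQ : 0 < Q) (ε : ℤ) (hε : ε = 1 ∨ ε = -1) :
    Complex.exp ((ε : ℂ) * (2 * (Real.pi:ℂ) * Complex.I * n / Q)) = 1 ↔ Q ∣ n := by
  rw [Complex.exp_eq_one_iff]
  have hQ' : (Q : ℂ) ≠ 0 := Nat.cast_ne_zero.mpr hQ.ne'
  have hpi : (2 * (Real.pi:ℂ) * Complex.I) ≠ 0 := by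
    simp [Real.pi_ne_zero, Complex.I_ne_zero]
  have hε2 : ε * ε = 1 := by rcases hε with h | h <;> simp [h]
  constructor
  · rintro ⟨m, hm⟩
    field_simp at hm
    have h2 : (2 * (Real.pi:ℂ) * Complex.I) * ((ε:ℂ) * n) =
        (2 * (Real.pi:ℂ) * Complex.I) * ((m:ℂ) * Q) := by linear_combination (2 * (Real.pi:ℂ) * Complex.I) * hm
    have h3 : (ε:ℂ) * n = (m:ℂ) * Q := mul_left_cancel₀ hpi h2
    have h4 : (ε * n : ℤ) = m * Q := by exact_mod_cast h3
    have h5 : (n : ℤ) = (ε * m) * Q := by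
      have h6 : (ε : ℤ) * (ε * n) = ε * (m * Q) := by rw [h4]
      calc (n:ℤ) = ε * ε * n := by rw [hε2]; ring
        _ = (ε * m) * Q := by rw [mul_assoc, h6]; ring
    have : (Q : ℤ) ∣ (n : ℤ) := ⟨ε * m, by linarith [h5]⟩
    exact_mod_cast this
  · rintro ⟨t, ht⟩
    refine ⟨ε * t, ?_⟩
    subst ht
    push_cast
    field_simp

lemma innerSumAux (F : ℕ → ℂ) (q n : ℕ) (hq : 0 < q) (ε : ℤ) (hε : ε = 1 ∨ ε = -1)
    (g : ℕ) (hg : g ∈ q.divisors) :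
    ∑ k ∈ Finset.Icc 1 q, (if g ∣ k then moeConv F g * Ee ε q n k else 0) =
    moeConv F g * (if (q/g) ∣ n then ((q/g : ℕ) : ℂ) else 0) := by
  obtain ⟨hgq, -⟩ := Nat.mem_divisors.mp hg
  have hgpos : 0 < g := Nat.pos_of_mem_divisors hg
  have hQ : 0 < q / g := Nat.div_pos (Nat.le_of_dvd hq hgq) hgpos
  have hmul : g * (q / g) = q := Nat.mul_div_cancel' hgq
  have hg' : (g:ℂ) ≠ 0 := Nat.cast_ne_zero.mpr hgpos.ne'
  have hq' : (q:ℂ) ≠ 0 := Nat.cast_ne_zero.mpr hq.ne'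
  have hQ' : ((q/g : ℕ):ℂ) ≠ 0 := Nat.cast_ne_zero.mpr hQ.ne'
  have hcast : (q:ℂ) = (g:ℂ) * ((q/g : ℕ):ℂ) := by exact_mod_cast hmul.symm
  have hEw : ∀ j : ℕ, Ee ε q n (g * j) =
      (Complex.exp ((ε:ℂ) * (2 * (Real.pi:ℂ) * Complex.I * n / (q/g : ℕ)))) ^ j := by
    intro j
    rw [Ee, ← Complex.exp_nat_mul]
    congr 1
    rw [hcast]
    push_cast
    field_simp
  have hwpow : (Complex.exp ((ε:ℂ) * (2 * (Real.pi:ℂ) * Complex.I * n / (q/g : ℕ)))) ^ (q/g) = 1 := by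
    rw [← Complex.exp_nat_mul]
    have harg : ((q/g : ℕ):ℂ) * ((ε:ℂ) * (2 * (Real.pi:ℂ) * Complex.I * n / (q/g : ℕ))) =
        ((ε * n : ℤ) : ℂ) * (2 * (Real.pi:ℂ) * Complex.I) := by
      push_cast
      field_simp
    rw [harg, Complex.exp_int_mul_two_pi_mul_I]
  calc ∑ k ∈ Finset.Icc 1 q, (if g ∣ k then moeConv F g * Ee ε q n k else 0)
      = ∑ k ∈ (Finset.Icc 1 q).filter (g ∣ ·), moeConv F g * Ee ε q n k :=
        (Finset.sum_filter _ _).symm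
    _ = ∑ j ∈ Finset.Icc 1 (q/g), moeConv F g * Ee ε q n (g * j) := by
        refine (Finset.sum_nbij' (fun j => g * j) (fun k => k / g) ?_ ?_ ?_ ?_ ?_).symm
        · intro j hj
          rw [Finset.mem_Icc] at hj
          rw [Finset.mem_filter, Finset.mem_Icc]
          refine ⟨⟨?_, ?_⟩, Dvd.intro j rfl⟩
          · exact Nat.one_le_iff_ne_zero.mpr (Nat.mul_ne_zero hgpos.ne' (by omega))
          · calc g * j ≤ g * (q/g) := Nat.mul_le_mul_left g hj.2
              _ = q := hmul
        · intro k hk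
          rw [Finset.mem_filter, Finset.mem_Icc] at hk
          rw [Finset.mem_Icc]
          exact ⟨(Nat.one_le_div_iff hgpos).mpr (Nat.le_of_dvd hk.1.1 hk.2),
            Nat.div_le_div_right hk.1.2⟩
        · intro j hj
          exact Nat.mul_div_cancel_left j hgpos
        · intro k hk
          rw [Finset.mem_filter] at hk
          exact Nat.mul_div_cancel' hk.2
        · intro j hj
          rfl
    _ = moeConv F g * ∑ j ∈ Finset.Icc 1 (q/g),
        (Complex.exp ((ε:ℂ) * (2 * (Real.pi:ℂ) * Complex.I * n / (q/g : ℕ)))) ^ j := by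
        rw [Finset.mul_sum]
        exact Finset.sum_congr rfl fun j _ => by rw [hEw j]
    _ = moeConv F g * (if (q/g) ∣ n then ((q/g : ℕ) : ℂ) else 0) := by
        rw [sum_pow_eq (q/g) hQ _ hwpow,
          if_congr (exp_eq_one_iff_dvd n (q/g) hQ ε hε) rfl rfl]

lemma master (F : ℕ → ℂ) (q n : ℕ) (hq : 0 < q) (ε : ℤ) (hε : ε = 1 ∨ ε = -1) :
    ∑ k ∈ Finset.Icc 1 q, F (Nat.gcd k q) * Ee ε q n k =
    ∑ m ∈ q.divisors.filter (· ∣ n), (m:ℂ) * moeConv F (q / m) := by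
  calc ∑ k ∈ Finset.Icc 1 q, F (Nat.gcd k q) * Ee ε q n k
      = ∑ k ∈ Finset.Icc 1 q, ∑ g ∈ q.divisors,
          (if g ∣ k then moeConv F g * Ee ε q n k else 0) := by
        refine Finset.sum_congr rfl fun k hk => ?_
        have hk1 : 1 ≤ k := (Finset.mem_Icc.mp hk).1
        have hgcd : 0 < Nat.gcd k q := Nat.gcd_pos_of_pos_left q hk1
        have hdiv : (Nat.gcd k q).divisors = q.divisors.filter (· ∣ k) := by
          ext g
          simp only [Nat.mem_divisors, Finset.mem_filter, Nat.dvd_gcd_iff]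
          constructor
          · rintro ⟨⟨h1, h2⟩, _⟩; exact ⟨⟨h2, hq.ne'⟩, h1⟩
          · rintro ⟨⟨h2, _⟩, h1⟩; exact ⟨⟨h1, h2⟩, hgcd.ne'⟩
        rw [← sum_moeConv_s16 F _ hgcd, hdiv, Finset.sum_mul, Finset.sum_filter]
    _ = ∑ g ∈ q.divisors, ∑ k ∈ Finset.Icc 1 q,
          (if g ∣ k then moeConv F g * Ee ε q n k else 0) := Finset.sum_comm
    _ = ∑ g ∈ q.divisors, moeConv F g *
          (if (q/g) ∣ n then ((q/g : ℕ) : ℂ) else 0) :=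
        Finset.sum_congr rfl fun g hg => innerSumAux F q n hq ε hε g hg
    _ = ∑ m ∈ q.divisors, moeConv F (q / m) * (if m ∣ n then (m:ℂ) else 0) := by
        rw [← Nat.sum_div_divisors q (fun m => moeConv F (q/m) * (if m ∣ n then (m:ℂ) else 0))]
        refine Finset.sum_congr rfl fun g hg => ?_
        obtain ⟨hgq, -⟩ := Nat.mem_divisors.mp hg
        rw [Nat.div_div_self hgq hq.ne']
    _ = ∑ m ∈ q.divisors.filter (· ∣ n), (m:ℂ) * moeConv F (q / m) := by
        rw [Finset.sum_filter]
        exact Finset.sum_congr rfl fun m _ => by split_ifs <;> ring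

lemma div_eq_of (r x y : ℕ) (hx : 0 < x) (h : r = x * y) : r / x = y := by
  subst h; exact Nat.mul_div_cancel_left y hx

lemma pos_left (r A B : ℕ) (hr : 0 < r) (h : r = A * B) : 0 < A :=
  Nat.pos_of_ne_zero fun hA => by subst hA; simp at h; omega

lemma pos_right (r A B : ℕ) (hr : 0 < r) (h : r = A * B) : 0 < B :=
  pos_left r B A hr (h.trans (mul_comm A B))

lemma mainCalc (F : ℕ → ℂ) (r : ℕ) (hr : 0 < r) :
    ∑ d ∈ r.divisors, ∑ m ∈ ((r/d).divisors.filter (· ∣ d)), (m:ℂ) * moeConv F ((r/d)/m) =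
    ∑ e ∈ r.divisors.filter (fun e => e^2 ∣ r), (e:ℂ) * F (r / e^2) := by
  calc ∑ d ∈ r.divisors, ∑ m ∈ ((r/d).divisors.filter (· ∣ d)), (m:ℂ) * moeConv F ((r/d)/m)
      = ∑ p ∈ r.divisors.sigma (fun d => (r/d).divisors.filter (· ∣ d)),
          (p.2:ℂ) * moeConv F ((r/p.1)/p.2) :=
        Finset.sum_sigma' _ _ _
    _ = ∑ p ∈ (r.divisors.filter (fun e => e^2 ∣ r)).sigma (fun e => (r/e^2).divisors),
          (p.1:ℂ) * moeConv F p.2 := by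
        refine Finset.sum_nbij' (fun p => ⟨p.2, r / (p.1 * p.2)⟩)
          (fun p => ⟨r / (p.1 * p.2), p.1⟩) ?_ ?_ ?_ ?_ ?_
        · rintro ⟨d, m⟩ hp
          simp only [Finset.mem_sigma, Finset.mem_filter, Nat.mem_divisors] at hp ⊢
          obtain ⟨⟨hd, -⟩, ⟨⟨hmu, -⟩, hmd⟩⟩ := hp
          obtain ⟨a, ha⟩ := hmd
          obtain ⟨c, hc⟩ := hmu
          have hr2 : r = d * m * c := by
            rw [← Nat.div_mul_cancel hd, hc]; ring
          have hr3 : r = m * m * (a * c) := by rw [hr2, ha]; ring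
          have hdm : 0 < d * m := pos_left r (d*m) c hr hr2
          have hm2 : 0 < m ^ 2 := by
            have := pos_left r (m*m) (a*c) hr hr3; nlinarith
          have hrdm : r / (d * m) = c := div_eq_of r (d*m) c hdm hr2
          have hre2 : r / m^2 = a * c := div_eq_of r (m^2) (a*c) hm2 (by rw [hr3]; ring)
          refine ⟨⟨⟨⟨d * c, by rw [hr2]; ring⟩, hr.ne'⟩, ⟨a * c, by rw [hr3]; ring⟩⟩, ?_, ?_⟩
          · rw [hrdm, hre2]; exact ⟨a, mul_comm a c⟩
          · rw [hre2]
            have := pos_right r (m*m) (a*c) hr hr3; omega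
        · rintro ⟨e, b⟩ hp
          simp only [Finset.mem_sigma, Finset.mem_filter, Nat.mem_divisors] at hp ⊢
          obtain ⟨⟨⟨he, -⟩, he2⟩, hb, -⟩ := hp
          obtain ⟨s, hs⟩ := hb
          have hr2 : r = e * e * (b * s) := by
            have h0 : r / e^2 * e^2 = r := Nat.div_mul_cancel he2
            rw [← h0, hs]; ring
          have hepos : 0 < e := by
            have := pos_left r (e*e) (b*s) hr hr2; nlinarith
          have hbpos : 0 < b := by
            have := pos_right r (e*e) (b*s) hr hr2
            exact pos_left _ b s this rfl
          have hd : r / (e * b) = e * s := div_eq_of r (e*b) (e*s) (by positivity) (by rw [hr2]; ring)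
          rw [hd]
          have hrd : r / (e * s) = e * b :=
            div_eq_of r (e*s) (e*b) (pos_left r (e*s) (e*b) hr (by rw [hr2]; ring)) (by rw [hr2]; ring)
          refine ⟨⟨⟨e * b, by rw [hr2]; ring⟩, hr.ne'⟩, ⟨⟨b, by rw [hrd]⟩, ?_⟩, ⟨s, by ring⟩⟩
          rw [hrd]
          exact Nat.mul_ne_zero hepos.ne' hbpos.ne'
        · rintro ⟨d, m⟩ hp
          simp only [Finset.mem_sigma, Finset.mem_filter, Nat.mem_divisors] at hp
          obtain ⟨⟨hd, -⟩, ⟨⟨hmu, -⟩, hmd⟩⟩ := hp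
          obtain ⟨c, hc⟩ := hmu
          have hr2 : r = d * m * c := by
            rw [← Nat.div_mul_cancel hd, hc]; ring
          have hdm : 0 < d * m := pos_left r (d*m) c hr hr2
          have h1 : r / (d * m) = c := div_eq_of r (d*m) c hdm hr2
          have hmc : 0 < m * c := pos_left r (m*c) d hr (by rw [hr2]; ring)
          have h3 : r / (m * c) = d := div_eq_of r (m*c) d hmc (by rw [hr2]; ring)
          simp only [h1, h3]
        · rintro ⟨e, b⟩ hp
          simp only [Finset.mem_sigma, Finset.mem_filter, Nat.mem_divisors] at hp
          obtain ⟨⟨⟨he, -⟩, he2⟩, hb, -⟩ := hp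
          obtain ⟨s, hs⟩ := hb
          have hr2 : r = e * e * (b * s) := by
            have h0 : r / e^2 * e^2 = r := Nat.div_mul_cancel he2
            rw [← h0, hs]; ring
          have hepos : 0 < e := by
            have := pos_left r (e*e) (b*s) hr hr2; nlinarith
          have hbpos : 0 < b := by
            have := pos_right r (e*e) (b*s) hr hr2
            exact pos_left _ b s this rfl
          have hd : r / (e * b) = e * s := div_eq_of r (e*b) (e*s) (by positivity) (by rw [hr2]; ring)
          have hspos : 0 < s := by
            have := pos_right r (e*e) (b*s) hr hr2
            exact pos_right _ b s this rfl
          have h3 : r / (e * s * e) = b := div_eq_of r (e*s*e) b (by positivity) (by rw [hr2]; ring)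
          simp only [hd, h3]
        · rintro ⟨d, m⟩ hp
          simp only [Finset.mem_sigma, Finset.mem_filter, Nat.mem_divisors] at hp
          obtain ⟨⟨hd, -⟩, ⟨⟨hmu, -⟩, hmd⟩⟩ := hp
          obtain ⟨c, hc⟩ := hmu
          have hr2 : r = d * m * c := by
            rw [← Nat.div_mul_cancel hd, hc]; ring
          have hdm : 0 < d * m := pos_left r (d*m) c hr hr2
          have h1 : r / (d * m) = c := div_eq_of r (d*m) c hdm hr2
          have h2 : (r / d) / m = c := by rw [Nat.div_div_eq_div_mul, h1]
          simp only [h1, h2]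
    _ = ∑ e ∈ r.divisors.filter (fun e => e^2 ∣ r),
          ∑ b ∈ (r/e^2).divisors, (e:ℂ) * moeConv F b :=
        Finset.sum_sigma _ _ _
    _ = ∑ e ∈ r.divisors.filter (fun e => e^2 ∣ r), (e:ℂ) * F (r / e^2) := by
        refine Finset.sum_congr rfl fun e he => ?_
        rw [Finset.mem_filter, Nat.mem_divisors] at he
        have hepos : 0 < e := Nat.pos_of_ne_zero fun h => by
          subst h; exact absurd he.1.1 (by simpa using hr.ne')
        have h2 : 0 < r / e^2 :=
          Nat.div_pos (Nat.le_of_dvd hr he.2) (by positivity)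
        rw [← Finset.mul_sum, sum_moeConv_s16 F _ h2]

/-- For the completely even sequence `f_r(n) = F(gcd(n,r))`:
`Σ_{d|r} f̂_{r/d}(d) = Σ_{e²k = r} e·F(k)`; in particular for `F = ε`,
`Σ_{d|r} c_{r/d}(d) = √r` if `r` is a square and `0` otherwise. -/
theorem dft_stmt_16 (F : ℕ → ℂ) (r : ℕ) (hr : 1 ≤ r) :
    (∑ d ∈ r.divisors, dft (r / d) (fun m => F (Nat.gcd m (r / d))) d =
      ∑ e ∈ r.divisors.filter (fun e => e ^ 2 ∣ r), (e : ℂ) * F (r / e ^ 2)) ∧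
    ((∑ d ∈ r.divisors, ram (r / d) d) =
      if IsSquare r then ((Nat.sqrt r : ℕ) : ℂ) else 0) := by
  have hr0 : 0 < r := hr
  have hqpos : ∀ d ∈ r.divisors, 0 < r / d := fun d hd =>
    Nat.div_pos (Nat.le_of_dvd hr0 (Nat.mem_divisors.mp hd).1)
      (Nat.pos_of_mem_divisors hd)
  constructor
  · calc ∑ d ∈ r.divisors, dft (r / d) (fun m => F (Nat.gcd m (r / d))) d
        = ∑ d ∈ r.divisors, ∑ m ∈ ((r/d).divisors.filter (· ∣ d)),
            (m:ℂ) * moeConv F ((r/d)/m) := by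
          refine Finset.sum_congr rfl fun d hd => ?_
          rw [← master F (r/d) d (hqpos d hd) (-1) (Or.inr rfl), dft]
          refine Finset.sum_congr rfl fun k hk => ?_
          congr 1
          rw [Ee]
          congr 1
          push_cast
          ring
      _ = _ := mainCalc F r hr0
  · have hram : ∀ d ∈ r.divisors, ram (r/d) d =
        ∑ m ∈ ((r/d).divisors.filter (· ∣ d)),
          (m:ℂ) * moeConv (fun t => if t = 1 then (1:ℂ) else 0) ((r/d)/m) := by
      intro d hd
      rw [← master (fun t => if t = 1 then (1:ℂ) else 0) (r/d) d (hqpos d hd) 1 (Or.inl rfl),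
        ram, Finset.sum_filter]
      refine Finset.sum_congr rfl fun k hk => ?_
      have hEe : Ee 1 (r/d) d k =
          Complex.exp (2 * (Real.pi : ℂ) * Complex.I * (k : ℂ) * (d : ℂ) / ((r/d : ℕ) : ℂ)) := by
        rw [Ee]
        congr 1
        push_cast
        ring
      split_ifs with h <;> simp [hEe]
    calc ∑ d ∈ r.divisors, ram (r / d) d
        = ∑ d ∈ r.divisors, ∑ m ∈ ((r/d).divisors.filter (· ∣ d)),
            (m:ℂ) * moeConv (fun t => if t = 1 then (1:ℂ) else 0) ((r/d)/m) :=
          Finset.sum_congr rfl hram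
      _ = ∑ e ∈ r.divisors.filter (fun e => e^2 ∣ r),
            (e:ℂ) * (if r / e^2 = 1 then (1:ℂ) else 0) :=
          mainCalc _ r hr0
      _ = ∑ e ∈ (r.divisors.filter (fun e => e^2 ∣ r)).filter (fun e => r / e^2 = 1),
            (e:ℂ) := by
          conv_rhs => rw [Finset.sum_filter]
          exact Finset.sum_congr rfl fun e _ => by split_ifs <;> simp
      _ = if IsSquare r then ((Nat.sqrt r : ℕ) : ℂ) else 0 := by
          by_cases hsq : IsSquare r
          · obtain ⟨s, hs⟩ := hsq
            have hset : (r.divisors.filter (fun e => e^2 ∣ r)).filter (fun e => r / e^2 = 1)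
                = {s} := by
              ext e
              simp only [Finset.mem_filter, Nat.mem_divisors, Finset.mem_singleton]
              constructor
              · rintro ⟨⟨⟨-, -⟩, he2⟩, h1⟩
                have h3 : r / e^2 * e^2 = r := Nat.div_mul_cancel he2
                rw [h1, one_mul] at h3
                have : e^2 = s^2 := by rw [h3, hs]; ring
                exact Nat.pow_left_injective (by norm_num) this
              · rintro rfl
                have hs2 : e^2 = r := by rw [hs]; ring
                refine ⟨⟨⟨⟨e, hs⟩, hr0.ne'⟩, hs2 ▸ dvd_rfl⟩, ?_⟩
                rw [← hs2]
                exact Nat.div_self (by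
                  have : 0 < e := Nat.pos_of_ne_zero fun h => by subst h; simp at hs; omega
                  positivity)
            rw [hset, Finset.sum_singleton, if_pos ⟨s, hs⟩]
            congr 1
            rw [hs, Nat.sqrt_eq]
          · have hset : (r.divisors.filter (fun e => e^2 ∣ r)).filter (fun e => r / e^2 = 1)
                = ∅ := by
              ext e
              simp only [Finset.mem_filter, Nat.mem_divisors, Finset.notMem_empty, iff_false]
              rintro ⟨⟨⟨-, -⟩, he2⟩, h1⟩
              have h3 : r / e^2 * e^2 = r := Nat.div_mul_cancel he2
              rw [h1, one_mul] at h3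
              exact hsq ⟨e, by rw [← h3]; ring⟩
            rw [hset, if_neg hsq]
            simp
end

section
/- Let F be an arithmetic function and let (f_r)_{r≥1} be the completely even sequence f_r(n) = F(gcd(n,r)). Then the sequence of discrete Fourier transforms (f̂_r)_{r≥1} is completely even (i.e., there exists an arithmetic function G with f̂_r(n) = G(gcd(n,r)) for all n, r ≥ 1) if and only if F = c·τ for some constant c ∈ ℂ, where τ is the number-of-divisors function. In that case f̂_r(n) = c·σ(gcd(n,r)) for all n, r ≥ 1, where σ is the sum-of-divisors function. -/
open Finset

lemma moeConv_inv (F : ℕ → ℂ) : ∀ n : ℕ, 0 < n → ∑ d ∈ n.divisors, moeConv F d = F n := by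
  rw [ArithmeticFunction.sum_eq_iff_sum_smul_moebius_eq]
  intro n hn
  rw [Nat.sum_divisorsAntidiagonal (fun d e => (ArithmeticFunction.moebius d) • F e)]
  simp [moeConv, zsmul_eq_mul]

lemma geomAux (q : ℕ) (hq : 0 < q) (n : ℕ) :
    ∑ j ∈ Finset.Icc 1 q, Complex.exp (-(2 * (Real.pi : ℂ) * Complex.I * (j : ℂ) * (n : ℂ) / (q : ℂ)))
      = if q ∣ n then (q : ℂ) else 0 := by
  have hq0 : (q : ℂ) ≠ 0 := Nat.cast_ne_zero.mpr hq.ne'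
  have h2pi : (2 * (Real.pi : ℂ) * Complex.I) ≠ 0 := by
    simp [Complex.I_ne_zero, Real.pi_ne_zero, Complex.ofReal_ne_zero]
  set z : ℂ := Complex.exp (-(2 * (Real.pi : ℂ) * Complex.I * (n : ℂ) / (q : ℂ))) with hz
  have hterm : ∀ j : ℕ, Complex.exp (-(2 * (Real.pi : ℂ) * Complex.I * (j : ℂ) * (n : ℂ) / (q : ℂ))) = z ^ j := by
    intro j
    rw [hz, ← Complex.exp_nat_mul]
    congr 1
    ring
  rw [Finset.sum_congr rfl fun j _ => hterm j]
  have hzq : z ^ q = 1 := by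
    rw [hz, ← Complex.exp_nat_mul]
    have h1 : (q : ℂ) * -(2 * (Real.pi : ℂ) * Complex.I * (n : ℂ) / (q : ℂ))
        = -(n : ℂ) * (2 * (Real.pi : ℂ) * Complex.I) := by
      field_simp
    rw [h1]
    simpa using Complex.exp_int_mul_two_pi_mul_I (-(n : ℤ))
  by_cases hd : q ∣ n
  · obtain ⟨m, rfl⟩ := hd
    have hz1 : z = 1 := by
      rw [hz]
      have h1 : -(2 * (Real.pi : ℂ) * Complex.I * ((q * m : ℕ) : ℂ) / (q : ℂ))
          = -(m : ℂ) * (2 * (Real.pi : ℂ) * Complex.I) := by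
        push_cast; field_simp
      rw [h1]
      simpa using Complex.exp_int_mul_two_pi_mul_I (-(m : ℤ))
    simp [hz1, Nat.card_Icc]
  · have hz1 : z ≠ 1 := by
      intro h
      rw [hz, Complex.exp_eq_one_iff] at h
      obtain ⟨k, hk⟩ := h
      have h1 : (2 * (Real.pi : ℂ) * Complex.I) * (n : ℂ)
          = (2 * (Real.pi : ℂ) * Complex.I) * (-(k : ℂ) * (q : ℂ)) := by
        field_simp at hk
        linear_combination (-(2 * (Real.pi : ℂ) * Complex.I)) * hk
      have h2 : (n : ℂ) = -(k : ℂ) * (q : ℂ) := mul_left_cancel₀ h2pi h1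
      have h3 : (n : ℤ) = -k * q := by exact_mod_cast h2
      exact hd (Int.natCast_dvd_natCast.mp ⟨-k, by rw [h3]; ring⟩)
    rw [if_neg hd]
    have : Finset.Icc 1 q = Finset.Ico 1 (q + 1) := by rw [Finset.Ico_add_one_right_eq_Icc]
    rw [this, Finset.sum_Ico_eq_sum_range]
    simp only [Nat.add_sub_cancel, pow_add, pow_one]
    rw [← Finset.mul_sum, geom_sum_eq hz1, hzq]
    simp

lemma reindexAux (r d : ℕ) (hd : d ∣ r) (hd0 : 0 < d) (f : ℕ → ℂ) :
    ∑ k ∈ (Finset.Icc 1 r).filter (fun k => d ∣ k), f k = ∑ j ∈ Finset.Icc 1 (r / d), f (d * j) := by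
  apply Finset.sum_nbij' (i := fun k => k / d) (j := fun j => d * j)
  · intro k hk
    simp only [Finset.mem_filter, Finset.mem_Icc] at hk ⊢
    obtain ⟨⟨h1, h2⟩, h3⟩ := hk
    constructor
    · exact Nat.one_le_div_iff hd0 |>.mpr (Nat.le_of_dvd (by omega) h3)
    · exact Nat.div_le_div_right h2
  · intro j hj
    simp only [Finset.mem_filter, Finset.mem_Icc] at hj ⊢
    obtain ⟨h1, h2⟩ := hj
    refine ⟨⟨Nat.mul_pos hd0 (by omega), ?_⟩, Dvd.intro j rfl⟩
    calc d * j ≤ d * (r / d) := Nat.mul_le_mul_left d h2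
    _ = r := Nat.mul_div_cancel' hd
  · intro k hk
    simp only [Finset.mem_filter] at hk
    exact Nat.mul_div_cancel' hk.2
  · intro j hj
    exact Nat.mul_div_cancel_left j hd0
  · intro k hk
    simp only [Finset.mem_filter] at hk
    rw [Nat.mul_div_cancel' hk.2]

lemma dft_formula (F : ℕ → ℂ) (r : ℕ) (hr : 0 < r) (n : ℕ) :
    dft r (fun m => F (Nat.gcd m r)) n
      = ∑ e ∈ (Nat.gcd n r).divisors, (e : ℂ) * moeConv F (r / e) := by
  have hr' : r ≠ 0 := hr.ne'
  have hr0 : (r : ℂ) ≠ 0 := Nat.cast_ne_zero.mpr hr'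
  rw [dft]
  -- Step 1: expand F (gcd k r) as sum over divisors of r
  have step1 : ∀ k ∈ Finset.Icc 1 r, (fun m => F (Nat.gcd m r)) k
      * Complex.exp (-(2 * (Real.pi : ℂ) * Complex.I * (k : ℂ) * (n : ℂ) / (r : ℂ)))
      = ∑ d ∈ r.divisors, (if d ∣ k then moeConv F d
          * Complex.exp (-(2 * (Real.pi : ℂ) * Complex.I * (k : ℂ) * (n : ℂ) / (r : ℂ))) else 0) := by
    intro k hk
    simp only [Finset.mem_Icc] at hk
    have hg : (Nat.gcd k r).divisors = r.divisors.filter (fun d => d ∣ k) := by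
      ext d
      simp only [Nat.mem_divisors, Finset.mem_filter, Nat.dvd_gcd_iff]
      constructor
      · rintro ⟨⟨h1, h2⟩, -⟩; exact ⟨⟨h2, hr'⟩, h1⟩
      · rintro ⟨⟨h1, -⟩, h2⟩; exact ⟨⟨h2, h1⟩, Nat.gcd_ne_zero_right hr'⟩
    have hF : F (Nat.gcd k r) = ∑ d ∈ r.divisors, (if d ∣ k then moeConv F d else 0) := by
      rw [← moeConv_inv F (Nat.gcd k r) (Nat.gcd_pos_of_pos_right k hr), hg,
        Finset.sum_filter]
    simp only [hF, Finset.sum_mul, ite_mul, zero_mul]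
  rw [Finset.sum_congr rfl step1, Finset.sum_comm]
  -- Step 2: evaluate inner sums
  have step2 : ∀ d ∈ r.divisors,
      (∑ k ∈ Finset.Icc 1 r, if d ∣ k then moeConv F d
          * Complex.exp (-(2 * (Real.pi : ℂ) * Complex.I * (k : ℂ) * (n : ℂ) / (r : ℂ))) else 0)
      = moeConv F d * (if (r / d) ∣ n then ((r / d : ℕ) : ℂ) else 0) := by
    intro d hd
    rw [Nat.mem_divisors] at hd
    obtain ⟨hdvd, -⟩ := hd
    have hd0 : 0 < d := Nat.pos_of_dvd_of_pos hdvd hr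
    have hq : 0 < r / d := Nat.div_pos (Nat.le_of_dvd hr hdvd) hd0
    have hd0' : (d : ℂ) ≠ 0 := Nat.cast_ne_zero.mpr hd0.ne'
    have hq0' : ((r / d : ℕ) : ℂ) ≠ 0 := Nat.cast_ne_zero.mpr hq.ne'
    rw [← Finset.sum_filter, reindexAux r d hdvd hd0]
    have hterm : ∀ j : ℕ, Complex.exp (-(2 * (Real.pi : ℂ) * Complex.I * ((d * j : ℕ) : ℂ) * (n : ℂ) / (r : ℂ)))
        = Complex.exp (-(2 * (Real.pi : ℂ) * Complex.I * (j : ℂ) * (n : ℂ) / ((r / d : ℕ) : ℂ))) := by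
      intro j
      congr 1
      have hr_eq : r = d * (r / d) := (Nat.mul_div_cancel' hdvd).symm
      conv_lhs => rw [hr_eq]
      push_cast
      have h : 2 * (Real.pi : ℂ) * Complex.I * ((d:ℂ) * (j : ℂ)) * (n : ℂ)
          = (d:ℂ) * (2 * (Real.pi : ℂ) * Complex.I * (j : ℂ) * (n : ℂ)) := by ring
      rw [h, mul_div_mul_left _ _ hd0']
    calc ∑ j ∈ Finset.Icc 1 (r / d), moeConv F d
          * Complex.exp (-(2 * (Real.pi : ℂ) * Complex.I * ((d * j : ℕ) : ℂ) * (n : ℂ) / (r : ℂ)))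
        = moeConv F d * ∑ j ∈ Finset.Icc 1 (r / d),
            Complex.exp (-(2 * (Real.pi : ℂ) * Complex.I * (j : ℂ) * (n : ℂ) / ((r / d : ℕ) : ℂ))) := by
          rw [Finset.mul_sum]
          exact Finset.sum_congr rfl fun j _ => by rw [hterm j]
      _ = moeConv F d * (if (r / d) ∣ n then ((r / d : ℕ) : ℂ) else 0) := by
          rw [geomAux (r / d) hq n]
  rw [Finset.sum_congr rfl step2]
  -- Step 3: substitute e = r / d
  have step3 : ∀ d ∈ r.divisors,
      moeConv F d * (if (r / d) ∣ n then ((r / d : ℕ) : ℂ) else 0)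
      = (fun e => moeConv F (r / e) * (if e ∣ n then (e : ℂ) else 0)) (r / d) := by
    intro d hd
    rw [Nat.mem_divisors] at hd
    simp only
    rw [Nat.div_div_self hd.1 hr']
  rw [Finset.sum_congr rfl step3, Nat.sum_div_divisors r
    (fun e => moeConv F (r / e) * (if e ∣ n then (e : ℂ) else 0))]
  have hgdiv : (Nat.gcd n r).divisors = r.divisors.filter (fun e => e ∣ n) := by
    ext e
    simp only [Nat.mem_divisors, Finset.mem_filter, Nat.dvd_gcd_iff]
    constructor
    · rintro ⟨⟨h1, h2⟩, -⟩; exact ⟨⟨h2, hr'⟩, h1⟩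
    · rintro ⟨⟨h1, -⟩, h2⟩; exact ⟨⟨h2, h1⟩, Nat.gcd_ne_zero_right hr'⟩
  rw [hgdiv, Finset.sum_filter]
  apply Finset.sum_congr rfl
  intro e _
  by_cases he : e ∣ n <;> simp [he, mul_comm]

lemma tau_moe : ∀ n : ℕ, 0 < n →
    ∑ d ∈ n.divisors, ((ArithmeticFunction.moebius d : ℤ) : ℂ) * (((n / d).divisors.card : ℕ) : ℂ) = 1 := by
  have h := (ArithmeticFunction.sum_eq_iff_sum_smul_moebius_eq
    (f := fun _ => (1 : ℂ)) (g := fun n => ((n.divisors.card : ℕ) : ℂ))).mp ?_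
  · intro n hn
    have h2 := h n hn
    rw [Nat.sum_divisorsAntidiagonal
      (fun d e => (ArithmeticFunction.moebius d) • ((e.divisors.card : ℕ) : ℂ))] at h2
    simpa [zsmul_eq_mul] using h2
  · intro n hn; simp

lemma moeConv_const (F : ℕ → ℂ) (c : ℂ)
    (hc : ∀ n : ℕ, 1 ≤ n → F n = c * ((n.divisors.card : ℕ) : ℂ)) :
    ∀ m : ℕ, 0 < m → moeConv F m = c := by
  intro m hm
  rw [moeConv]
  have hstep : ∀ d ∈ m.divisors, ((ArithmeticFunction.moebius d : ℤ) : ℂ) * F (m / d)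
      = c * (((ArithmeticFunction.moebius d : ℤ) : ℂ) * (((m / d).divisors.card : ℕ) : ℂ)) := by
    intro d hd
    rw [Nat.mem_divisors] at hd
    have hd0 : 0 < d := Nat.pos_of_dvd_of_pos hd.1 hm
    have : 0 < m / d := Nat.div_pos (Nat.le_of_dvd hm hd.1) hd0
    rw [hc (m / d) this]
    ring
  rw [Finset.sum_congr rfl hstep, ← Finset.mul_sum, tau_moe m hm, mul_one]

lemma dft_sigma (F : ℕ → ℂ) (c : ℂ)
    (hc : ∀ n : ℕ, 1 ≤ n → F n = c * ((n.divisors.card : ℕ) : ℂ)) :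
    ∀ n r : ℕ, 1 ≤ n → 1 ≤ r →
      dft r (fun m => F (Nat.gcd m r)) n
        = c * ((ArithmeticFunction.sigma 1 (Nat.gcd n r) : ℕ) : ℂ) := by
  intro n r hn hr
  rw [dft_formula F r hr n]
  have hstep : ∀ e ∈ (Nat.gcd n r).divisors, (e : ℂ) * moeConv F (r / e) = (e : ℂ) * c := by
    intro e he
    rw [Nat.mem_divisors] at he
    have her : e ∣ r := he.1.trans (Nat.gcd_dvd_right n r)
    have he0 : 0 < e := Nat.pos_of_dvd_of_pos her hr
    have : 0 < r / e := Nat.div_pos (Nat.le_of_dvd hr her) he0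
    rw [moeConv_const F c hc (r / e) this]
  rw [Finset.sum_congr rfl hstep, ArithmeticFunction.sigma_one_apply]
  push_cast
  rw [← Finset.sum_mul, mul_comm]

/-- For the completely even sequence `f_r(n) = F(gcd(n,r))`, the DFT sequence `(f̂_r)` is
completely even iff `F = c·τ` for some constant `c ∈ ℂ`; in that case
`f̂_r(n) = c·σ(gcd(n,r))`. -/
theorem dft_stmt_17 (F : ℕ → ℂ) :
    ((∃ G : ℕ → ℂ, ∀ n r : ℕ, 1 ≤ n → 1 ≤ r →
        dft r (fun m => F (Nat.gcd m r)) n = G (Nat.gcd n r)) ↔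
      (∃ c : ℂ, ∀ n : ℕ, 1 ≤ n → F n = c * ((n.divisors.card : ℕ) : ℂ))) ∧
    (∀ c : ℂ, (∀ n : ℕ, 1 ≤ n → F n = c * ((n.divisors.card : ℕ) : ℂ)) →
      ∀ n r : ℕ, 1 ≤ n → 1 ≤ r →
        dft r (fun m => F (Nat.gcd m r)) n =
          c * ((ArithmeticFunction.sigma 1 (Nat.gcd n r) : ℕ) : ℂ)) := by
  constructor
  · constructor
    · rintro ⟨G, hG⟩
      refine ⟨G 1, fun n hn => ?_⟩
      have hconst : ∀ r : ℕ, 0 < r → moeConv F r = G 1 := by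
        intro r hr
        have h1 := hG 1 r le_rfl hr
        rw [dft_formula F r hr 1] at h1
        simpa [Nat.gcd_one_left, Nat.divisors_one] using h1
      rw [← moeConv_inv F n hn,
        Finset.sum_congr rfl (fun d hd => hconst d (Nat.pos_of_mem_divisors hd)),
        Finset.sum_const, nsmul_eq_mul, mul_comm]
    · rintro ⟨c, hc⟩
      exact ⟨fun g => c * ((ArithmeticFunction.sigma 1 g : ℕ) : ℂ),
        fun n r hn hr => dft_sigma F c hc n r hn hr⟩
  · exact fun c hc n r hn hr => dft_sigma F c hc n r hn hr
end

section
/- Let F be an arithmetic function that is strongly multiplicative (multiplicative with F(p^a) = F(p) for every prime p and every a ≥ 1) and satisfies F(p) ≠ 1 − p for every prime p. Let (f_r)_{r≥1} be the completely even sequence f_r(n) = F(gcd(n,r)). Then for all n, r ≥ 1, with m = r/gcd(n,r): f̂_r(n) = (F*μ)(m) · (F*φ)(r) / (F*φ)(m), where * is Dirichlet convolution, μ the Möbius function and φ Euler's totient function. In particular, for every prime power p^a (a ≥ 1): f̂_{p^a}(n) = p^{a−1}(p + F(p) − 1) if p^a | n; f̂_{p^a}(n) = p^{a−1}(F(p)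 − 1) if p^{a−1} exactly divides n; and f̂_{p^a}(n) = 0 if p^{a−1} ∤ n. -/
open Finset

namespace DftAux

lemma geom (q n : ℕ) (hq : 1 ≤ q) :
    (∑ k ∈ Icc 1 q, Complex.exp (-(2 * (Real.pi : ℂ) * Complex.I * (k : ℂ) * (n : ℂ) / (q : ℂ))))
      = if q ∣ n then (q : ℂ) else 0 := by
  have hq0 : (q : ℂ) ≠ 0 := Nat.cast_ne_zero.mpr (by omega)
  have h2πI : (2 * (Real.pi : ℂ) * Complex.I) ≠ 0 := by
    simp [Real.pi_ne_zero, Complex.I_ne_zero, Complex.ofReal_ne_zero]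
  set ω : ℂ := Complex.exp (-(2 * (Real.pi : ℂ) * Complex.I * (n : ℂ) / (q : ℂ))) with hω
  have hterm : ∀ k : ℕ,
      Complex.exp (-(2 * (Real.pi : ℂ) * Complex.I * (k : ℂ) * (n : ℂ) / (q : ℂ))) = ω ^ k := by
    intro k
    rw [hω, ← Complex.exp_nat_mul]
    congr 1
    ring
  have hωq : ω ^ q = 1 := by
    rw [hω, ← Complex.exp_nat_mul]
    exact Complex.exp_eq_one_iff.mpr ⟨-(n : ℤ), by push_cast; field_simp⟩
  simp only [hterm]
  by_cases hdvd : q ∣ n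
  · obtain ⟨c, rfl⟩ := hdvd
    have hωone : ω = 1 := by
      rw [hω]
      exact Complex.exp_eq_one_iff.mpr ⟨-(c : ℤ), by push_cast; field_simp⟩
    rw [if_pos ⟨c, rfl⟩]
    simp [hωone, Nat.card_Icc]
  · have hω1 : ω ≠ 1 := by
      intro h
      rw [hω, Complex.exp_eq_one_iff] at h
      obtain ⟨m, hm⟩ := h
      apply hdvd
      field_simp at hm
      have h3 : (2 * (Real.pi : ℂ) * Complex.I) * (n : ℂ)
          = (2 * (Real.pi : ℂ) * Complex.I) * (((-m * q : ℤ)) : ℂ) := by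
        push_cast
        linear_combination (-(2 * (Real.pi : ℂ) * Complex.I)) * hm
      have h4 : (n : ℤ) = -m * q := by exact_mod_cast mul_left_cancel₀ h2πI h3
      have : (q : ℤ) ∣ (n : ℤ) := ⟨-m, by linarith⟩
      exact_mod_cast this
    rw [if_neg hdvd]
    have hIcc : Icc 1 q = Ico 1 (q + 1) := by
      ext k; simp [Nat.lt_succ_iff]
    rw [hIcc, geom_sum_Ico hω1 (by omega)]
    rw [pow_succ, hωq, one_mul, pow_one, sub_self, zero_div]

end DftAux

namespace DftAux

open ArithmeticFunction

noncomputable def Fa (F : ℕ → ℂ) : ArithmeticFunction ℂ :=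
  ⟨fun n => if n = 0 then 0 else F n, by simp⟩

lemma Fa_apply (F : ℕ → ℂ) {n : ℕ} (hn : n ≠ 0) : Fa F n = F n := if_neg hn

noncomputable def hF (F : ℕ → ℂ) : ArithmeticFunction ℂ :=
  (ArithmeticFunction.moebius : ArithmeticFunction ℤ) * Fa F

noncomputable def phiA : ArithmeticFunction ℂ :=
  ⟨fun n => (Nat.totient n : ℂ), by simp⟩

noncomputable def SF (F : ℕ → ℂ) : ArithmeticFunction ℂ := Fa F * phiA

lemma hF_eq (F : ℕ → ℂ) {m : ℕ} (hm : m ≠ 0) :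
    hF F m = ∑ d ∈ m.divisors, F d * ((ArithmeticFunction.moebius (m / d) : ℤ) : ℂ) := by
  rw [hF, mul_apply, Nat.sum_divisorsAntidiagonal'
    (f := fun a b => ((↑moebius : ArithmeticFunction ℂ) a) * Fa F b)]
  apply Finset.sum_congr rfl
  intro d hd
  rw [Nat.mem_divisors] at hd
  rw [intCoe_apply, Fa_apply F (fun h => hd.2 (by simpa [h] using hd.1)), mul_comm]

lemma SF_eq (F : ℕ → ℂ) {r : ℕ} (hr : r ≠ 0) :
    SF F r = ∑ d ∈ r.divisors, F d * ((Nat.totient (r / d) : ℕ) : ℂ) := by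
  rw [SF, mul_apply, Nat.sum_divisorsAntidiagonal
    (f := fun a b => Fa F a * phiA b)]
  apply Finset.sum_congr rfl
  intro d hd
  rw [Nat.mem_divisors] at hd
  rw [Fa_apply F (Nat.pos_of_mem_divisors (Nat.mem_divisors.mpr hd)).ne']
  rfl

lemma sum_hF (F : ℕ → ℂ) {m : ℕ} (hm : m ≠ 0) :
    ∑ d ∈ m.divisors, hF F d = F m := by
  have h1 : (↑(ArithmeticFunction.zeta : ArithmeticFunction ℕ) : ArithmeticFunction ℂ) * hF F = Fa F := by
    rw [hF, ← mul_assoc, coe_zeta_mul_coe_moebius, one_mul]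
  have h2 : ((↑(ArithmeticFunction.zeta : ArithmeticFunction ℕ) : ArithmeticFunction ℂ) * hF F) m = Fa F m := by
    rw [h1]
  rw [coe_zeta_mul_apply] at h2
  rw [h2, Fa_apply F hm]

end DftAux

namespace DftAux

open ArithmeticFunction

variable {F : ℕ → ℂ}

lemma Fa_mult (hmult : IsMult F) : (Fa F).IsMultiplicative := by
  constructor
  · rw [Fa_apply F one_ne_zero]; exact hmult.1
  · intro m n hmn
    rcases eq_or_ne m 0 with rfl | hm
    · obtain rfl : n = 1 := Nat.coprime_zero_left n |>.mp hmn
      simp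
    rcases eq_or_ne n 0 with rfl | hn
    · obtain rfl : m = 1 := Nat.coprime_zero_right m |>.mp hmn
      simp
    rw [Fa_apply _ (mul_ne_zero hm hn), Fa_apply _ hm, Fa_apply _ hn]
    exact hmult.2 m n (by omega) (by omega) hmn

lemma hF_mult (hmult : IsMult F) : (hF F).IsMultiplicative :=
  (isMultiplicative_moebius.intCast).mul (Fa_mult hmult)

lemma phiA_mult : (phiA).IsMultiplicative := by
  constructor
  · show ((Nat.totient 1 : ℕ) : ℂ) = 1
    simp
  · intro m n hmn
    show ((Nat.totient (m * n) : ℕ) : ℂ) = ((Nat.totient m : ℕ) : ℂ) * ((Nat.totient n : ℕ) : ℂ)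
    rw [Nat.totient_mul hmn]
    push_cast
    ring

lemma SF_mult (hmult : IsMult F) : (SF F).IsMultiplicative :=
  (Fa_mult hmult).mul phiA_mult

lemma hF_prime (hmult : IsMult F) {p : ℕ} (hp : p.Prime) : hF F p = F p - 1 := by
  rw [hF_eq F hp.pos.ne', hp.divisors, Finset.sum_pair hp.one_lt.ne]
  rw [Nat.div_one, Nat.div_self hp.pos, hmult.1, moebius_apply_prime hp, moebius_apply_one]
  push_cast
  ring

lemma hF_pp (hstrong : ∀ p a : ℕ, p.Prime → 1 ≤ a → F (p ^ a) = F p)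
    {p c : ℕ} (hp : p.Prime) (hc : 2 ≤ c) : hF F (p ^ c) = 0 := by
  obtain ⟨b, rfl⟩ : ∃ b, c = b + 2 := ⟨c - 2, by omega⟩
  rw [hF_eq F (pow_ne_zero _ hp.pos.ne')]
  rw [Nat.sum_divisors_prime_pow hp]
  rw [Finset.sum_range_succ, Finset.sum_range_succ]
  have h0 : ∀ t ∈ Finset.range (b + 1),
      F (p ^ t) * ((moebius (p ^ (b + 2) / p ^ t) : ℤ) : ℂ) = 0 := by
    intro t ht
    rw [Finset.mem_range] at ht
    rw [Nat.pow_div (by omega) hp.pos]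
    rw [moebius_apply_prime_pow hp (by omega), if_neg (by omega)]
    simp
  rw [Finset.sum_eq_zero h0]
  rw [Nat.pow_div (by omega) hp.pos, Nat.pow_div (by omega) hp.pos]
  have e1 : b + 2 - (b + 1) = 1 := by omega
  rw [e1, Nat.sub_self, pow_one, pow_zero]
  rw [moebius_apply_prime hp, moebius_apply_one,
    hstrong p (b + 1) hp (by omega), hstrong p (b + 2) hp (by omega)]
  push_cast
  ring

lemma SF_pp (hmult : IsMult F) (hstrong : ∀ p a : ℕ, p.Prime → 1 ≤ a → F (p ^ a) = F p)
    {p a : ℕ} (hp : p.Prime) (ha : 1 ≤ a) :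
    SF F (p ^ a) = (p : ℂ) ^ (a - 1) * ((p : ℂ) - 1 + F p) := by
  obtain ⟨b, rfl⟩ : ∃ b, a = b + 1 := ⟨a - 1, by omega⟩
  rw [SF_eq F (pow_ne_zero _ hp.pos.ne')]
  rw [Nat.sum_divisors_prime_pow hp]
  rw [Finset.sum_range_succ']
  have h1 : ∀ t ∈ Finset.range (b + 1),
      F (p ^ (t + 1)) * ((Nat.totient (p ^ (b + 1) / p ^ (t + 1)) : ℕ) : ℂ)
        = F p * ((Nat.totient (p ^ (b - t)) : ℕ) : ℂ) := by
    intro t ht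
    rw [Finset.mem_range] at ht
    rw [Nat.pow_div (by omega) hp.pos, hstrong p (t + 1) hp (by omega)]
    have e : b + 1 - (t + 1) = b - t := by omega
    rw [e]
  rw [Finset.sum_congr rfl h1, ← Finset.mul_sum]
  have h2 : ∑ t ∈ Finset.range (b + 1), ((Nat.totient (p ^ (b - t)) : ℕ) : ℂ)
      = ((p ^ b : ℕ) : ℂ) := by
    rw [← Nat.cast_sum]
    congr 1
    have h3 := Finset.sum_range_reflect (fun j => Nat.totient (p ^ j)) (b + 1)
    simp only [Nat.add_sub_cancel] at h3
    rw [h3, ← Nat.sum_divisors_prime_pow hp, Nat.sum_totient]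
  rw [h2, pow_zero, Nat.div_one, hmult.1, Nat.totient_prime_pow hp (by omega)]
  have e2 : b + 1 - 1 = b := by omega
  rw [e2]
  have hp1 : 1 ≤ p := hp.pos
  push_cast [Nat.cast_sub hp1]
  ring

end DftAux

namespace DftAux

open ArithmeticFunction

variable {F : ℕ → ℂ}

noncomputable def Gn (n : ℕ) : ArithmeticFunction ℂ :=
  ⟨fun e => if e ≠ 0 ∧ e ∣ n then (e : ℂ) else 0, by simp⟩

lemma Gn_apply {n e : ℕ} : Gn n e = if e ≠ 0 ∧ e ∣ n then (e : ℂ) else 0 := rfl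

lemma Gn_mult {n : ℕ} : (Gn n).IsMultiplicative := by
  constructor
  · rw [Gn_apply, if_pos ⟨one_ne_zero, one_dvd n⟩, Nat.cast_one]
  · intro x y hxy
    rcases eq_or_ne x 0 with rfl | hx
    · obtain rfl : y = 1 := Nat.coprime_zero_left y |>.mp hxy
      simp [Gn_apply]
    rcases eq_or_ne y 0 with rfl | hy
    · obtain rfl : x = 1 := Nat.coprime_zero_right x |>.mp hxy
      simp [Gn_apply]
    rw [Gn_apply, Gn_apply, Gn_apply]
    by_cases hd : x * y ∣ n
    · rw [if_pos ⟨mul_ne_zero hx hy, hd⟩, if_pos ⟨hx, dvd_trans (dvd_mul_right x y) hd⟩,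
        if_pos ⟨hy, dvd_trans (dvd_mul_left y x) hd⟩, Nat.cast_mul]
    · rw [if_neg (fun h => hd h.2)]
      by_cases hdx : x ∣ n
      · have hdy : ¬ y ∣ n := fun h => hd (Nat.Coprime.mul_dvd_of_dvd_of_dvd hxy hdx h)
        rw [if_pos ⟨hx, hdx⟩, if_neg (fun h => hdy h.2), mul_zero]
      · rw [if_neg (fun h => hdx h.2), zero_mul]

noncomputable def A (F : ℕ → ℂ) (n : ℕ) : ArithmeticFunction ℂ := Gn n * hF F

lemma A_mult (hmult : IsMult F) {n : ℕ} : (A F n).IsMultiplicative :=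
  Gn_mult.mul (hF_mult hmult)

lemma divisors_gcd {n r : ℕ} (hr : r ≠ 0) :
    (Nat.gcd n r).divisors = r.divisors.filter (· ∣ n) := by
  ext d
  simp only [Nat.mem_divisors, Finset.mem_filter]
  constructor
  · intro ⟨h1, _⟩
    exact ⟨⟨h1.trans (Nat.gcd_dvd_right n r), hr⟩, h1.trans (Nat.gcd_dvd_left n r)⟩
  · intro ⟨⟨h1, _⟩, h2⟩
    exact ⟨Nat.dvd_gcd h2 h1, Nat.gcd_ne_zero_right hr⟩

lemma A_eq {n r : ℕ} (hr : r ≠ 0) :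
    A F n r = ∑ e ∈ (Nat.gcd n r).divisors, (e : ℂ) * hF F (r / e) := by
  rw [A, mul_apply, Nat.sum_divisorsAntidiagonal (f := fun a b => Gn n a * hF F b)]
  rw [divisors_gcd hr, Finset.sum_filter]
  apply Finset.sum_congr rfl
  intro e he
  rw [Nat.mem_divisors] at he
  have he0 : e ≠ 0 := fun h => he.2 (by simpa [h] using he.1)
  rw [Gn_apply]
  by_cases hd : e ∣ n
  · rw [if_pos ⟨he0, hd⟩, if_pos hd]
  · rw [if_neg (fun h => hd h.2), if_neg hd, zero_mul]

lemma dft_eq_A {n r : ℕ} (hn : 1 ≤ n) (hr : 1 ≤ r) :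
    dft r (fun k => F (Nat.gcd k r)) n = A F n r := by
  have hr0 : r ≠ 0 := by omega
  rw [dft, A_eq hr0]
  have step1 : ∀ k ∈ Finset.Icc 1 r,
      F (Nat.gcd k r) = ∑ d ∈ r.divisors, if d ∣ k then hF F d else 0 := by
    intro k hk
    rw [← Finset.sum_filter, ← divisors_gcd (n := k) hr0]
    exact (sum_hF F (Nat.gcd_ne_zero_right hr0)).symm
  calc
    ∑ k ∈ Finset.Icc 1 r, F (Nat.gcd k r) *
        Complex.exp (-(2 * (Real.pi : ℂ) * Complex.I * (k : ℂ) * (n : ℂ) / (r : ℂ)))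
      = ∑ k ∈ Finset.Icc 1 r, ∑ d ∈ r.divisors, (if d ∣ k then hF F d else 0) *
          Complex.exp (-(2 * (Real.pi : ℂ) * Complex.I * (k : ℂ) * (n : ℂ) / (r : ℂ))) := by
        apply Finset.sum_congr rfl
        intro k hk
        rw [step1 k hk, Finset.sum_mul]
    _ = ∑ d ∈ r.divisors, ∑ k ∈ Finset.Icc 1 r, (if d ∣ k then hF F d else 0) *
          Complex.exp (-(2 * (Real.pi : ℂ) * Complex.I * (k : ℂ) * (n : ℂ) / (r : ℂ))) :=
        Finset.sum_comm
    _ = ∑ d ∈ r.divisors, hF F d * ∑ j ∈ Finset.Icc 1 (r / d),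
          Complex.exp (-(2 * (Real.pi : ℂ) * Complex.I * (j : ℂ) * (n : ℂ) / ((r / d : ℕ) : ℂ))) := by
        apply Finset.sum_congr rfl
        intro d hd
        rw [Nat.mem_divisors] at hd
        have hd0 : d ≠ 0 := fun h => hd.2 (by simpa [h] using hd.1)
        have hdr : d ∣ r := hd.1
        have hrd0 : r / d ≠ 0 := Nat.div_ne_zero_iff.mpr ⟨hd0, Nat.le_of_dvd (by omega) hdr⟩
        have hsum : ∑ k ∈ Finset.Icc 1 r, (if d ∣ k then hF F d else 0) *
              Complex.exp (-(2 * (Real.pi : ℂ) * Complex.I * (k : ℂ) * (n : ℂ) / (r : ℂ)))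
            = ∑ k ∈ (Finset.Icc 1 r).filter (fun k => d ∣ k), hF F d *
              Complex.exp (-(2 * (Real.pi : ℂ) * Complex.I * (k : ℂ) * (n : ℂ) / (r : ℂ))) := by
          rw [Finset.sum_filter]
          apply Finset.sum_congr rfl
          intro k _
          by_cases h : d ∣ k <;> simp [h]
        rw [hsum, Finset.mul_sum]
        apply Finset.sum_nbij' (fun k => k / d) (fun j => d * j)
        · intro k hk
          simp only [Finset.mem_filter, Finset.mem_Icc] at hk
          obtain ⟨⟨hk1, hk2⟩, hkd⟩ := hk
          rw [Finset.mem_Icc]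
          constructor
          · exact Nat.one_le_div_iff (by omega) |>.mpr (Nat.le_of_dvd (by omega) hkd)
          · exact Nat.div_le_div_right hk2
        · intro j hj
          rw [Finset.mem_Icc] at hj
          simp only [Finset.mem_filter, Finset.mem_Icc]
          refine ⟨⟨Nat.one_le_iff_ne_zero.mpr (mul_ne_zero hd0 (by omega)), ?_⟩, Dvd.intro j rfl⟩
          calc d * j ≤ d * (r / d) := Nat.mul_le_mul_left d hj.2
            _ = r := Nat.mul_div_cancel' hdr
        · intro k hk
          simp only [Finset.mem_filter] at hk
          exact Nat.mul_div_cancel' hk.2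
        · intro j hj
          exact Nat.mul_div_cancel_left j (by omega)
        · intro k hk
          simp only [Finset.mem_filter, Finset.mem_Icc] at hk
          obtain ⟨⟨hk1, hk2⟩, hkd⟩ := hk
          have hkc : ((k : ℕ) : ℂ) = (d : ℂ) * ((k / d : ℕ) : ℂ) := by
            rw [← Nat.cast_mul, Nat.mul_div_cancel' hkd]
          have hrc : ((r : ℕ) : ℂ) = (d : ℂ) * ((r / d : ℕ) : ℂ) := by
            rw [← Nat.cast_mul, Nat.mul_div_cancel' hdr]
          have hdc : (d : ℂ) ≠ 0 := Nat.cast_ne_zero.mpr hd0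
          have hrdc : ((r / d : ℕ) : ℂ) ≠ 0 := Nat.cast_ne_zero.mpr hrd0
          have hexp : -(2 * (Real.pi : ℂ) * Complex.I * (k : ℂ) * (n : ℂ) / (r : ℂ))
              = -(2 * (Real.pi : ℂ) * Complex.I * ((k / d : ℕ) : ℂ) * (n : ℂ) / ((r / d : ℕ) : ℂ)) := by
            rw [hkc, hrc]
            field_simp
          rw [hexp]
    _ = ∑ d ∈ r.divisors, hF F d * (if (r / d) ∣ n then ((r / d : ℕ) : ℂ) else 0) := by
        apply Finset.sum_congr rfl
        intro d hd
        rw [Nat.mem_divisors] at hd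
        have hd0 : d ≠ 0 := fun h => hd.2 (by simpa [h] using hd.1)
        have hrd1 : 1 ≤ r / d := Nat.one_le_div_iff (by omega) |>.mpr (Nat.le_of_dvd (by omega) hd.1)
        rw [geom (r / d) n hrd1]
    _ = ∑ e ∈ (Nat.gcd n r).divisors, (e : ℂ) * hF F (r / e) := by
        have key : ∀ d ∈ r.divisors, hF F d * (if (r / d) ∣ n then ((r / d : ℕ) : ℂ) else 0)
            = (fun e => hF F (r / e) * (if e ∣ n then (e : ℂ) else 0)) (r / d) := by
          intro d hd
          rw [Nat.mem_divisors] at hd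
          simp only
          rw [Nat.div_div_self hd.1 hr0]
        rw [Finset.sum_congr rfl key, Nat.sum_div_divisors r
          (fun e => hF F (r / e) * (if e ∣ n then (e : ℂ) else 0))]
        rw [divisors_gcd hr0, Finset.sum_filter]
        apply Finset.sum_congr rfl
        intro e he
        by_cases hd : e ∣ n
        · rw [if_pos hd, if_pos hd]
          ring
        · rw [if_neg hd, if_neg hd, mul_zero]

end DftAux

namespace DftAux

open ArithmeticFunction

variable {F : ℕ → ℂ}

lemma A_sum_pp {p i j n : ℕ} (hp : p.Prime) (hij : j ≤ i) (hgcd : Nat.gcd n (p ^ i) = p ^ j) :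
    A F n (p ^ i) = ∑ t ∈ Finset.range (j + 1), (p : ℂ) ^ t * hF F (p ^ (i - t)) := by
  rw [A_eq (pow_ne_zero _ hp.pos.ne'), hgcd, Nat.sum_divisors_prime_pow hp]
  apply Finset.sum_congr rfl
  intro t ht
  rw [Finset.mem_range] at ht
  rw [Nat.pow_div (by omega) hp.pos, Nat.cast_pow]

lemma gcd_pp_of_dvd {p a n : ℕ} (h : p ^ a ∣ n) : Nat.gcd n (p ^ a) = p ^ a :=
  Nat.dvd_antisymm (Nat.gcd_dvd_right n _) (Nat.dvd_gcd h dvd_rfl)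

lemma gcd_pp_mid {p a n : ℕ} (hp : p.Prime) (ha : 1 ≤ a) (h1 : p ^ (a - 1) ∣ n)
    (h2 : ¬ p ^ a ∣ n) : Nat.gcd n (p ^ a) = p ^ (a - 1) := by
  obtain ⟨j, hj, hgcd⟩ := (Nat.dvd_prime_pow hp).mp (Nat.gcd_dvd_right n (p ^ a))
  have hjn : p ^ j ∣ n := hgcd ▸ Nat.gcd_dvd_left n (p ^ a)
  have hja : j ≠ a := fun h => h2 (h ▸ hjn)
  have hlow : a - 1 ≤ j := by
    have := Nat.dvd_gcd h1 (pow_dvd_pow p (by omega : a - 1 ≤ a))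
    rw [hgcd] at this
    exact (Nat.pow_dvd_pow_iff_le_right hp.one_lt).mp this
  have : j = a - 1 := by omega
  rw [hgcd, this]

lemma A_pp_top (hmult : IsMult F)
    (hstrong : ∀ p a : ℕ, p.Prime → 1 ≤ a → F (p ^ a) = F p)
    {p a n : ℕ} (hp : p.Prime) (ha : 1 ≤ a) (h : p ^ a ∣ n) :
    A F n (p ^ a) = (p : ℂ) ^ (a - 1) * ((p : ℂ) + F p - 1) := by
  obtain ⟨b, rfl⟩ : ∃ b, a = b + 1 := ⟨a - 1, by omega⟩
  rw [A_sum_pp hp le_rfl (gcd_pp_of_dvd h)]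
  rw [Finset.sum_range_succ, Finset.sum_range_succ]
  have h0 : ∀ t ∈ Finset.range b, (p : ℂ) ^ t * hF F (p ^ (b + 1 - t)) = 0 := by
    intro t ht
    rw [Finset.mem_range] at ht
    rw [hF_pp hstrong hp (by omega), mul_zero]
  rw [Finset.sum_eq_zero h0]
  have e1 : b + 1 - b = 1 := by omega
  rw [e1, Nat.sub_self, pow_zero, pow_one, hF_prime hmult hp, (hF_mult hmult).1]
  have e2 : b + 1 - 1 = b := by omega
  rw [e2]
  ring

lemma A_pp_mid (hmult : IsMult F)
    (hstrong : ∀ p a : ℕ, p.Prime → 1 ≤ a → F (p ^ a) = F p)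
    {p a n : ℕ} (hp : p.Prime) (ha : 1 ≤ a) (h1 : p ^ (a - 1) ∣ n) (h2 : ¬ p ^ a ∣ n) :
    A F n (p ^ a) = (p : ℂ) ^ (a - 1) * (F p - 1) := by
  obtain ⟨b, rfl⟩ : ∃ b, a = b + 1 := ⟨a - 1, by omega⟩
  have e2 : b + 1 - 1 = b := by omega
  rw [A_sum_pp hp (by omega : b ≤ b + 1) (by rw [← e2] at h1 ⊢; exact gcd_pp_mid hp (by omega) h1 h2)]
  rw [Finset.sum_range_succ]
  have h0 : ∀ t ∈ Finset.range b, (p : ℂ) ^ t * hF F (p ^ (b + 1 - t)) = 0 := by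
    intro t ht
    rw [Finset.mem_range] at ht
    rw [hF_pp hstrong hp (by omega), mul_zero]
  rw [Finset.sum_eq_zero h0]
  have e1 : b + 1 - b = 1 := by omega
  rw [e1, pow_one, hF_prime hmult hp, e2, zero_add]

lemma A_pp_low (hstrong : ∀ p a : ℕ, p.Prime → 1 ≤ a → F (p ^ a) = F p)
    {p a n : ℕ} (hp : p.Prime) (ha : 1 ≤ a) (h1 : ¬ p ^ (a - 1) ∣ n) :
    A F n (p ^ a) = 0 := by
  obtain ⟨j, hj, hgcd⟩ := (Nat.dvd_prime_pow hp).mp (Nat.gcd_dvd_right n (p ^ a))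
  have hjn : p ^ j ∣ n := hgcd ▸ Nat.gcd_dvd_left n (p ^ a)
  have hjlt : ¬ (a - 1 ≤ j) := fun h => h1 ((pow_dvd_pow p h).trans hjn)
  rw [A_sum_pp hp hj hgcd]
  apply Finset.sum_eq_zero
  intro t ht
  rw [Finset.mem_range] at ht
  rw [hF_pp hstrong hp (by omega), mul_zero]

lemma key_pp (hmult : IsMult F)
    (hstrong : ∀ p a : ℕ, p.Prime → 1 ≤ a → F (p ^ a) = F p)
    {p i n : ℕ} (hp : p.Prime) (hn : n ≠ 0) :
    A F n (p ^ i) * SF F (p ^ i / Nat.gcd n (p ^ i)) =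
      hF F (p ^ i / Nat.gcd n (p ^ i)) * SF F (p ^ i) := by
  rcases Nat.eq_zero_or_pos i with rfl | hi
  · simp only [pow_zero, Nat.gcd_one_right, Nat.div_self Nat.one_pos]
    rw [(A_mult hmult).1, (SF_mult hmult).1, (hF_mult hmult).1]
  by_cases h1 : p ^ i ∣ n
  · rw [gcd_pp_of_dvd h1, Nat.div_self (pow_pos hp.pos i)]
    rw [(SF_mult hmult).1, (hF_mult hmult).1, mul_one, one_mul,
      A_pp_top hmult hstrong hp hi h1, SF_pp hmult hstrong hp hi]
    ring
  by_cases h2 : p ^ (i - 1) ∣ n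
  · rw [gcd_pp_mid hp hi h2 h1, Nat.pow_div (by omega) hp.pos]
    have e : i - (i - 1) = 1 := by omega
    rw [e, pow_one]
    have hSFp : SF F p = (p : ℂ) - 1 + F p := by
      have h3 := SF_pp hmult hstrong hp (le_refl 1)
      rw [pow_one] at h3
      simpa using h3
    rw [A_pp_mid hmult hstrong hp hi h2 h1, hF_prime hmult hp, hSFp,
      SF_pp hmult hstrong hp hi]
    ring
  · obtain ⟨j, hj, hgcd⟩ := (Nat.dvd_prime_pow hp).mp (Nat.gcd_dvd_right n (p ^ i))
    have hjn : p ^ j ∣ n := hgcd ▸ Nat.gcd_dvd_left n (p ^ i)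
    have hjlt : ¬ (i - 1 ≤ j) := fun h => h2 ((pow_dvd_pow p h).trans hjn)
    rw [hgcd, Nat.pow_div hj hp.pos, A_pp_low hstrong hp hi h2, zero_mul,
      hF_pp hstrong hp (by omega), zero_mul]

end DftAux

namespace DftAux

open ArithmeticFunction

variable {F : ℕ → ℂ}

lemma key (hmult : IsMult F)
    (hstrong : ∀ p a : ℕ, p.Prime → 1 ≤ a → F (p ^ a) = F p)
    {n : ℕ} (hn : n ≠ 0) (r : ℕ) :
    A F n r * SF F (r / Nat.gcd n r) = hF F (r / Nat.gcd n r) * SF F r := by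
  set L : ArithmeticFunction ℂ :=
    ⟨fun r => A F n r * SF F (r / Nat.gcd n r), by simp⟩ with hL
  set R : ArithmeticFunction ℂ :=
    ⟨fun r => hF F (r / Nat.gcd n r) * SF F r, by simp⟩ with hR
  have hLapp : ∀ r, L r = A F n r * SF F (r / Nat.gcd n r) := fun _ => rfl
  have hRapp : ∀ r, R r = hF F (r / Nat.gcd n r) * SF F r := fun _ => rfl
  have hone : Nat.gcd n 1 = 1 := Nat.gcd_one_right n
  have hLmult : L.IsMultiplicative := by
    constructor
    · rw [hLapp, hone, Nat.div_one, (A_mult hmult).1, (SF_mult hmult).1, mul_one]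
    · intro x y hxy
      rcases eq_or_ne x 0 with rfl | hx
      · obtain rfl : y = 1 := Nat.coprime_zero_left y |>.mp hxy
        rw [zero_mul, hLapp 0, hLapp 1, ArithmeticFunction.map_zero, zero_mul, zero_mul]
      rcases eq_or_ne y 0 with rfl | hy
      · obtain rfl : x = 1 := Nat.coprime_zero_right x |>.mp hxy
        rw [mul_zero, hLapp 0, hLapp 1, ArithmeticFunction.map_zero, zero_mul, mul_zero]
      have hg : Nat.gcd n (x * y) = Nat.gcd n x * Nat.gcd n y := Nat.Coprime.gcd_mul n hxy
      have hdiv : (x * y) / Nat.gcd n (x * y) = (x / Nat.gcd n x) * (y / Nat.gcd n y) := by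
        rw [hg, Nat.div_mul_div_comm (Nat.gcd_dvd_right n x) (Nat.gcd_dvd_right n y)]
      have hcop : Nat.Coprime (x / Nat.gcd n x) (y / Nat.gcd n y) :=
        Nat.Coprime.coprime_dvd_left (Nat.div_dvd_of_dvd (Nat.gcd_dvd_right n x))
          (Nat.Coprime.coprime_dvd_right (Nat.div_dvd_of_dvd (Nat.gcd_dvd_right n y)) hxy)
      rw [hLapp, hLapp, hLapp, hdiv, (A_mult hmult).2 hxy, (SF_mult hmult).2 hcop]
      ring
  have hR0 : R 0 = 0 := by rw [hRapp, ArithmeticFunction.map_zero, mul_zero]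
  have hRmult : R.IsMultiplicative := by
    constructor
    · rw [hRapp, hone, Nat.div_one, (hF_mult hmult).1, (SF_mult hmult).1, mul_one]
    · intro x y hxy
      rcases eq_or_ne x 0 with rfl | hx
      · obtain rfl : y = 1 := Nat.coprime_zero_left y |>.mp hxy
        rw [zero_mul, hR0, zero_mul]
      rcases eq_or_ne y 0 with rfl | hy
      · obtain rfl : x = 1 := Nat.coprime_zero_right x |>.mp hxy
        rw [mul_zero, hR0, mul_zero]
      have hg : Nat.gcd n (x * y) = Nat.gcd n x * Nat.gcd n y := Nat.Coprime.gcd_mul n hxy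
      have hdiv : (x * y) / Nat.gcd n (x * y) = (x / Nat.gcd n x) * (y / Nat.gcd n y) := by
        rw [hg, Nat.div_mul_div_comm (Nat.gcd_dvd_right n x) (Nat.gcd_dvd_right n y)]
      have hcop : Nat.Coprime (x / Nat.gcd n x) (y / Nat.gcd n y) :=
        Nat.Coprime.coprime_dvd_left (Nat.div_dvd_of_dvd (Nat.gcd_dvd_right n x))
          (Nat.Coprime.coprime_dvd_right (Nat.div_dvd_of_dvd (Nat.gcd_dvd_right n y)) hxy)
      rw [hRapp, hRapp, hRapp, hdiv, (hF_mult hmult).2 hcop, (SF_mult hmult).2 hxy]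
      ring
  have hLR : L = R := by
    rw [ArithmeticFunction.IsMultiplicative.eq_iff_eq_on_prime_powers L hLmult R hRmult]
    intro p i hp
    rw [hLapp, hRapp]
    exact key_pp hmult hstrong hp hn
  have := congrArg (fun f : ArithmeticFunction ℂ => f r) hLR
  simpa only [hLapp, hRapp] using this

end DftAux

namespace DftAux

open ArithmeticFunction

variable {F : ℕ → ℂ}

lemma SF_ne (hmult : IsMult F)
    (hstrong : ∀ p a : ℕ, p.Prime → 1 ≤ a → F (p ^ a) = F p)
    (hne : ∀ p : ℕ, p.Prime → F p ≠ 1 - (p : ℂ))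
    {q : ℕ} (hq : q ≠ 0) : SF F q ≠ 0 := by
  rw [ArithmeticFunction.IsMultiplicative.multiplicative_factorization _ (SF_mult hmult) hq]
  rw [Finsupp.prod]
  apply Finset.prod_ne_zero_iff.mpr
  intro p hp
  have hpp : p.Prime := Nat.prime_of_mem_primeFactors (by rwa [Nat.support_factorization] at hp)
  have hk : q.factorization p ≠ 0 := Finsupp.mem_support_iff.mp hp
  rw [SF_pp hmult hstrong hpp (by omega)]
  apply mul_ne_zero (pow_ne_zero _ (Nat.cast_ne_zero.mpr hpp.pos.ne'))
  intro h0
  exact hne p hpp (by linear_combination h0)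

end DftAux


/-- Hölder-type identity: if `F` is strongly multiplicative with `F(p) ≠ 1 − p` for all primes
`p`, then for `f_r(n) = F(gcd(n,r))` and `m = r/gcd(n,r)`,
`f̂_r(n) = (F*μ)(m)·(F*φ)(r)/(F*φ)(m)`; in particular the given prime-power formulas hold. -/
theorem dft_stmt_18 (F : ℕ → ℂ)
    (hmult : IsMult F)
    (hstrong : ∀ p a : ℕ, p.Prime → 1 ≤ a → F (p ^ a) = F p)
    (hne : ∀ p : ℕ, p.Prime → F p ≠ 1 - (p : ℂ)) :
    (∀ n r : ℕ, 1 ≤ n → 1 ≤ r →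
      dft r (fun k => F (Nat.gcd k r)) n =
        (∑ d ∈ (r / Nat.gcd n r).divisors,
            F d * ((ArithmeticFunction.moebius ((r / Nat.gcd n r) / d) : ℤ) : ℂ)) *
          (∑ d ∈ r.divisors, F d * ((Nat.totient (r / d) : ℕ) : ℂ)) /
          (∑ d ∈ (r / Nat.gcd n r).divisors,
            F d * ((Nat.totient ((r / Nat.gcd n r) / d) : ℕ) : ℂ))) ∧
    (∀ p a n : ℕ, p.Prime → 1 ≤ a → 1 ≤ n →
      (p ^ a ∣ n →
        dft (p ^ a) (fun k => F (Nat.gcd k (p ^ a))) n = (p : ℂ) ^ (a - 1) * ((p : ℂ) + F p - 1)) ∧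
      (p ^ (a - 1) ∣ n → ¬ p ^ a ∣ n →
        dft (p ^ a) (fun k => F (Nat.gcd k (p ^ a))) n = (p : ℂ) ^ (a - 1) * (F p - 1)) ∧
      (¬ p ^ (a - 1) ∣ n →
        dft (p ^ a) (fun k => F (Nat.gcd k (p ^ a))) n = 0)) := by
  constructor
  · intro n r hn hr
    have hn0 : n ≠ 0 := by omega
    have hr0 : r ≠ 0 := by omega
    have hg : Nat.gcd n r ∣ r := Nat.gcd_dvd_right n r
    have hm0 : r / Nat.gcd n r ≠ 0 :=
      Nat.div_ne_zero_iff.mpr ⟨Nat.gcd_ne_zero_right hr0, Nat.le_of_dvd (by omega) hg⟩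
    rw [DftAux.dft_eq_A hn hr]
    rw [← DftAux.hF_eq F hm0, ← DftAux.SF_eq F hr0, ← DftAux.SF_eq F hm0]
    rw [eq_div_iff (DftAux.SF_ne hmult hstrong hne hm0)]
    exact DftAux.key hmult hstrong hn0 r
  · intro p a n hp ha hn
    have hpa : 1 ≤ p ^ a := Nat.one_le_iff_ne_zero.mpr (pow_ne_zero _ hp.pos.ne')
    refine ⟨?_, ?_, ?_⟩
    · intro h
      rw [DftAux.dft_eq_A hn hpa]
      exact DftAux.A_pp_top hmult hstrong hp ha h
    · intro h1 h2
      rw [DftAux.dft_eq_A hn hpa]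
      exact DftAux.A_pp_mid hmult hstrong hp ha h1 h2
    · intro h1
      rw [DftAux.dft_eq_A hn hpa]
      exact DftAux.A_pp_low hstrong hp ha h1
end
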